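/- arXiv:2302.07170 — 6 statements merged into one kernel-verified Lean document; each statement's English description precedes it below -/
import Mathlib

section
/- For every integer n ≥ 2, the Gutman index of the pentagonal cylinder chain P_n equals 49n³ + 64n² + 5n if n is even, and 49n³ + 64n² + 4n if n is odd. That is, (1/2)·Σ_{u∈V}Σ_{v∈V} d_u·d_v·dist(u,v) equals the stated value, where dist is the graph (shortest-path) distance in P_n. -/
open Matrix Real Finset

/-- Vertex set of the pentagonal chains on `5 n` vertices:
upper vertices `u_1, …, u_{2n}`, lower vertices `l_1, …, l_{2n}`
and middle vertices `w_1, …, w_n` (all 0-indexed here). -/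
abbrev PentV (n : ℕ) := Fin (2 * n) ⊕ Fin (2 * n) ⊕ Fin n

/-- Adjacency (as a `Bool`) of the pentagonal cylinder chain `P_n`:
upper and lower `2n`-cycles, rungs `u_i l_i` for odd (1-indexed) `i`,
and `w_k` joined to `u_{2k}` and `l_{2k}`. -/
def cylAdj (n : ℕ) : PentV n → PentV n → Bool
  | Sum.inl i, Sum.inl j =>
      decide (i.val + 1 = j.val ∨ j.val + 1 = i.val ∨
        (i.val = 0 ∧ j.val = 2 * n - 1) ∨ (j.val = 0 ∧ i.val = 2 * n - 1))
  | Sum.inl i, Sum.inr (Sum.inl j) => decide (i.val = j.val ∧ i.val % 2 = 0)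
  | Sum.inl i, Sum.inr (Sum.inr k) => decide (i.val = 2 * k.val + 1)
  | Sum.inr (Sum.inl i), Sum.inl j => decide (i.val = j.val ∧ i.val % 2 = 0)
  | Sum.inr (Sum.inl i), Sum.inr (Sum.inl j) =>
      decide (i.val + 1 = j.val ∨ j.val + 1 = i.val ∨
        (i.val = 0 ∧ j.val = 2 * n - 1) ∨ (j.val = 0 ∧ i.val = 2 * n - 1))
  | Sum.inr (Sum.inl i), Sum.inr (Sum.inr k) => decide (i.val = 2 * k.val + 1)
  | Sum.inr (Sum.inr k), Sum.inl i => decide (i.val = 2 * k.val + 1)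
  | Sum.inr (Sum.inr k), Sum.inr (Sum.inl i) => decide (i.val = 2 * k.val + 1)
  | Sum.inr (Sum.inr _), Sum.inr (Sum.inr _) => false

lemma cylAdj_symm (n : ℕ) (x y : PentV n) : cylAdj n x y = cylAdj n y x := by
  rcases x with i | i | i <;> rcases y with j | j | j <;>
    first
      | rfl
      | (simp only [cylAdj, decide_eq_decide]; omega)

lemma cylAdj_irrefl (n : ℕ) (x : PentV n) : ¬ cylAdj n x x = true := by
  rcases x with i | i | i
  · have h := i.isLt
    simp only [cylAdj, decide_eq_true_eq]
    omega
  · have h := i.isLt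
    simp only [cylAdj, decide_eq_true_eq]
    omega
  · simp [cylAdj]

/-- The pentagonal cylinder chain `P_n` as a simple graph. -/
def cylGraph (n : ℕ) : SimpleGraph (PentV n) where
  Adj x y := cylAdj n x y = true
  symm := ⟨fun x y h => (cylAdj_symm n y x).trans h⟩
  loopless := ⟨fun x h => cylAdj_irrefl n x h⟩

/-- The degree of a vertex: the number of its neighbours. -/
def pentDeg (n : ℕ) (adj : PentV n → PentV n → Bool) (x : PentV n) : ℕ :=
  (Finset.univ.filter (fun y => adj x y = true)).card


def cyc (m a b : ℕ) : ℕ := min (max a b - min a b) (m - (max a b - min a b))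

def pdist (n : ℕ) : PentV n → PentV n → ℕ
  | Sum.inl i, Sum.inl j => cyc (2*n) i.val j.val
  | Sum.inl i, Sum.inr (Sum.inl j) =>
      cyc (2*n) i.val j.val + 1 + (if i.val = j.val ∧ i.val % 2 = 1 then 1 else 0)
  | Sum.inl i, Sum.inr (Sum.inr k) => cyc (2*n) i.val (2*k.val+1) + 1
  | Sum.inr (Sum.inl i), Sum.inl j =>
      cyc (2*n) i.val j.val + 1 + (if i.val = j.val ∧ i.val % 2 = 1 then 1 else 0)
  | Sum.inr (Sum.inl i), Sum.inr (Sum.inl j) => cyc (2*n) i.val j.val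
  | Sum.inr (Sum.inl i), Sum.inr (Sum.inr k) => cyc (2*n) i.val (2*k.val+1) + 1
  | Sum.inr (Sum.inr k), Sum.inl j => cyc (2*n) (2*k.val+1) j.val + 1
  | Sum.inr (Sum.inr k), Sum.inr (Sum.inl j) => cyc (2*n) (2*k.val+1) j.val + 1
  | Sum.inr (Sum.inr k), Sum.inr (Sum.inr m) =>
      if k.val = m.val then 0 else cyc (2*n) (2*k.val+1) (2*m.val+1) + 2

lemma pdist_self (n : ℕ) (x : PentV n) : pdist n x x = 0 := by
  rcases x with i | i | i <;> simp [pdist, cyc]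

lemma pdist_eq_zero {n : ℕ} {x y : PentV n} (h : pdist n x y = 0) : x = y := by
  have key : ∀ (a b : Fin (2*n)), cyc (2*n) a.val b.val = 0 → a = b := by
    intro a b hab
    have h1 := a.isLt; have h2 := b.isLt
    exact Fin.ext (by simp only [cyc] at hab; omega)
  rcases x with i | i | i <;> rcases y with j | j | j <;>
    simp only [pdist] at h <;>
    first
    | exact congrArg Sum.inl (key i j h)
    | exact congrArg (Sum.inr ∘ Sum.inl) (key i j h)
    | (simp only [cyc] at h; omega)
    | (simp only [cyc] at h; split_ifs at h <;> omega)
    | (split_ifs at h with hc <;>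
       first
       | exact congrArg (Sum.inr ∘ Sum.inr) (Fin.ext hc)
       | (simp only [cyc] at h; omega))

set_option maxHeartbeats 1000000 in
lemma pdist_lip (n : ℕ) (x z : PentV n) (h : cylAdj n x z = true) (y : PentV n) :
    pdist n x y ≤ pdist n z y + 1 := by
  rcases x with i | i | i <;> rcases z with j | j | j <;>
    simp only [cylAdj, decide_eq_true_eq, Bool.false_eq_true] at h <;>
    rcases y with m | m | m <;>
    (simp only [pdist]
     have h1 := i.isLt
     have h2 := j.isLt
     have h3 := m.isLt
     simp only [cyc]
     (try split_ifs) <;> omega)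

lemma cycstep (n i j : ℕ) (hn : 2 ≤ n) (hi : i < 2*n) (hj : j < 2*n)
    (h : cyc (2*n) i j ≠ 0) :
    ∃ i', i' < 2*n ∧
      (i + 1 = i' ∨ i' + 1 = i ∨ (i = 0 ∧ i' = 2*n-1) ∨ (i' = 0 ∧ i = 2*n-1)) ∧
      cyc (2*n) i' j + 1 = cyc (2*n) i j := by
  rcases Nat.lt_or_ge (i+1) (2*n) with h1 | h1
  · by_cases h2 : cyc (2*n) (i+1) j + 1 = cyc (2*n) i j
    · exact ⟨i+1, h1, by omega, h2⟩
    · rcases eq_or_ne i 0 with h3 | h3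
      · exact ⟨2*n-1, by omega, by omega, by simp only [cyc] at *; omega⟩
      · exact ⟨i-1, by omega, by omega, by simp only [cyc] at *; omega⟩
  · by_cases h2 : cyc (2*n) 0 j + 1 = cyc (2*n) i j
    · exact ⟨0, by omega, by omega, h2⟩
    · exact ⟨i-1, by omega, by omega, by simp only [cyc] at *; omega⟩

lemma pdist_step (n : ℕ) (hn : 2 ≤ n) (x y : PentV n) (h : pdist n x y ≠ 0) :
    ∃ z, cylAdj n x z = true ∧ pdist n z y + 1 = pdist n x y := by
  rcases x with i | i | i
  · rcases y with j | j | j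
    · simp only [pdist] at h
      obtain ⟨i', hlt, hadj, hc⟩ := cycstep n i.val j.val hn i.isLt j.isLt h
      exact ⟨Sum.inl ⟨i', hlt⟩, by simp only [cylAdj, decide_eq_true_eq]; exact hadj,
        by simp only [pdist]; exact hc⟩
    · by_cases hpar : i.val % 2 = 0
      · refine ⟨Sum.inr (Sum.inl i), ?_, ?_⟩
        · simp only [cylAdj, decide_eq_true_eq]; exact ⟨trivial, hpar⟩
        · simp only [pdist]
          rw [if_neg (by omega : ¬(i.val = j.val ∧ i.val % 2 = 1))]
      · by_cases hij : i.val = j.val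
        · refine ⟨Sum.inr (Sum.inr ⟨(i.val - 1)/2, by have := i.isLt; omega⟩), ?_, ?_⟩
          · simp only [cylAdj, decide_eq_true_eq]; omega
          · simp only [pdist]
            have h2 : 2*((i.val-1)/2)+1 = i.val := by omega
            rw [h2, if_pos ⟨hij, by omega⟩]
        · have hc0 : cyc (2*n) i.val j.val ≠ 0 := by
            have := i.isLt; have := j.isLt; simp only [cyc]; omega
          obtain ⟨i', hlt, hadj, hc⟩ := cycstep n i.val j.val hn i.isLt j.isLt hc0
          refine ⟨Sum.inl ⟨i', hlt⟩, by simp only [cylAdj, decide_eq_true_eq]; exact hadj, ?_⟩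
          simp only [pdist]
          have hb := i.isLt
          rw [if_neg (show ¬(i' = j.val ∧ i' % 2 = 1) by omega),
            if_neg (show ¬(i.val = j.val ∧ i.val % 2 = 1) by omega)]
          omega
    · by_cases hik : i.val = 2*j.val+1
      · refine ⟨Sum.inr (Sum.inr j), ?_, ?_⟩
        · simp only [cylAdj, decide_eq_true_eq]; exact hik
        · rw [pdist_self]
          simp only [pdist]
          have : cyc (2*n) i.val (2*j.val+1) = 0 := by simp only [cyc]; omega
          omega
      · have hc0 : cyc (2*n) i.val (2*j.val+1) ≠ 0 := by
          have := i.isLt; have := j.isLt; simp only [cyc]; omega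
        obtain ⟨i', hlt, hadj, hc⟩ := cycstep n i.val (2*j.val+1) hn i.isLt
          (by have := j.isLt; omega) hc0
        exact ⟨Sum.inl ⟨i', hlt⟩, by simp only [cylAdj, decide_eq_true_eq]; exact hadj,
          by simp only [pdist]; omega⟩
  · rcases y with j | j | j
    · by_cases hpar : i.val % 2 = 0
      · refine ⟨Sum.inl i, ?_, ?_⟩
        · simp only [cylAdj, decide_eq_true_eq]; exact ⟨trivial, hpar⟩
        · simp only [pdist]
          rw [if_neg (by omega : ¬(i.val = j.val ∧ i.val % 2 = 1))]
      · by_cases hij : i.val = j.val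
        · refine ⟨Sum.inr (Sum.inr ⟨(i.val - 1)/2, by have := i.isLt; omega⟩), ?_, ?_⟩
          · simp only [cylAdj, decide_eq_true_eq]; omega
          · simp only [pdist]
            have h2 : 2*((i.val-1)/2)+1 = i.val := by omega
            rw [h2, if_pos ⟨hij, by omega⟩]
        · have hc0 : cyc (2*n) i.val j.val ≠ 0 := by
            have := i.isLt; have := j.isLt; simp only [cyc]; omega
          obtain ⟨i', hlt, hadj, hc⟩ := cycstep n i.val j.val hn i.isLt j.isLt hc0
          refine ⟨Sum.inr (Sum.inl ⟨i', hlt⟩),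
            by simp only [cylAdj, decide_eq_true_eq]; exact hadj, ?_⟩
          simp only [pdist]
          have hb := i.isLt
          rw [if_neg (show ¬(i' = j.val ∧ i' % 2 = 1) by omega),
            if_neg (show ¬(i.val = j.val ∧ i.val % 2 = 1) by omega)]
          omega
    · simp only [pdist] at h
      obtain ⟨i', hlt, hadj, hc⟩ := cycstep n i.val j.val hn i.isLt j.isLt h
      exact ⟨Sum.inr (Sum.inl ⟨i', hlt⟩),
        by simp only [cylAdj, decide_eq_true_eq]; exact hadj,
        by simp only [pdist]; exact hc⟩
    · by_cases hik : i.val = 2*j.val+1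
      · refine ⟨Sum.inr (Sum.inr j), ?_, ?_⟩
        · simp only [cylAdj, decide_eq_true_eq]; exact hik
        · rw [pdist_self]
          simp only [pdist]
          have : cyc (2*n) i.val (2*j.val+1) = 0 := by simp only [cyc]; omega
          omega
      · have hc0 : cyc (2*n) i.val (2*j.val+1) ≠ 0 := by
          have := i.isLt; have := j.isLt; simp only [cyc]; omega
        obtain ⟨i', hlt, hadj, hc⟩ := cycstep n i.val (2*j.val+1) hn i.isLt
          (by have := j.isLt; omega) hc0
        exact ⟨Sum.inr (Sum.inl ⟨i', hlt⟩),
          by simp only [cylAdj, decide_eq_true_eq]; exact hadj,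
          by simp only [pdist]; omega⟩
  · have hlt : 2*i.val+1 < 2*n := by have := i.isLt; omega
    rcases y with j | j | j
    · exact ⟨Sum.inl ⟨2*i.val+1, hlt⟩,
        by simp only [cylAdj, decide_eq_true_eq],
        by simp only [pdist]⟩
    · exact ⟨Sum.inr (Sum.inl ⟨2*i.val+1, hlt⟩),
        by simp only [cylAdj, decide_eq_true_eq],
        by simp only [pdist]⟩
    · simp only [pdist] at h
      have hij : ¬ i.val = j.val := by intro e; rw [if_pos e] at h; exact h rfl
      refine ⟨Sum.inl ⟨2*i.val+1, hlt⟩,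
        by simp only [cylAdj, decide_eq_true_eq], ?_⟩
      simp only [pdist]
      rw [if_neg hij]

lemma exists_walk (n : ℕ) (hn : 2 ≤ n) :
    ∀ (m : ℕ) (x y : PentV n), pdist n x y = m →
      ∃ w : (cylGraph n).Walk x y, w.length = m := by
  intro m
  induction m with
  | zero =>
    intro x y h
    obtain rfl := pdist_eq_zero h
    exact ⟨SimpleGraph.Walk.nil, rfl⟩
  | succ m ih =>
    intro x y h
    obtain ⟨z, hadj, hdec⟩ := pdist_step n hn x y (by omega)
    obtain ⟨w, hw⟩ := ih z y (by omega)
    exact ⟨SimpleGraph.Walk.cons (show (cylGraph n).Adj x z from hadj) w, by simp [hw]⟩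

lemma pdist_le_walk (n : ℕ) {x y : PentV n} (w : (cylGraph n).Walk x y) :
    pdist n x y ≤ w.length := by
  induction w with
  | nil => simp [pdist_self]
  | @cons a b c hab p ih =>
    have := pdist_lip n a b hab c
    rw [SimpleGraph.Walk.length_cons]
    omega

lemma dist_eq_pdist (n : ℕ) (hn : 2 ≤ n) (x y : PentV n) :
    (cylGraph n).dist x y = pdist n x y := by
  obtain ⟨w, hw⟩ := exists_walk n hn (pdist n x y) x y rfl
  refine le_antisymm (hw ▸ SimpleGraph.dist_le w) ?_
  obtain ⟨p, hp⟩ := SimpleGraph.Reachable.exists_walk_length_eq_dist ⟨w⟩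
  calc pdist n x y ≤ p.length := pdist_le_walk n p
    _ = _ := hp

lemma count_zero (m : ℕ) (q : Fin m → Prop) [DecidablePred q]
    (hq : ∀ j, ¬ q j) :
    (∑ j : Fin m, if q j then 1 else 0) = 0 := by
  refine Finset.sum_eq_zero fun j _ => ?_
  rw [if_neg (hq j)]

lemma count_onec (m c a : ℕ) (ha : a < m) (q : Fin m → Prop) [DecidablePred q]
    (hq : ∀ j, q j ↔ j.val = a) :
    (∑ j : Fin m, if q j then c else 0) = c := by
  have h1 : ∑ j : Fin m, (if q j then c else 0)
      = ∑ j : Fin m, (if j = (⟨a, ha⟩ : Fin m) then c else 0) := by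
    refine Finset.sum_congr rfl fun j _ => ?_
    by_cases h : q j
    · rw [if_pos h, if_pos (Fin.ext ((hq j).1 h))]
    · rw [if_neg h, if_neg (fun e => h ((hq j).2 (by rw [e])))]
  rw [h1, Finset.sum_ite_eq' Finset.univ (⟨a, ha⟩ : Fin m) (fun _ => c),
    if_pos (Finset.mem_univ _)]

lemma count_two (m a b : ℕ) (ha : a < m) (hb : b < m) (hab : a ≠ b)
    (q : Fin m → Prop) [DecidablePred q]
    (hq : ∀ j, q j ↔ (j.val = a ∨ j.val = b)) :
    (∑ j : Fin m, if q j then 1 else 0) = 2 := by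
  have h1 : ∑ j : Fin m, (if q j then (1:ℕ) else 0)
      = ∑ j : Fin m, ((if j = (⟨a, ha⟩ : Fin m) then 1 else 0)
          + (if j = (⟨b, hb⟩ : Fin m) then 1 else 0)) := by
    refine Finset.sum_congr rfl fun j _ => ?_
    by_cases h : q j
    · rcases (hq j).1 h with h2 | h2
      · rw [if_pos h, if_pos (Fin.ext h2), if_neg (by simp [Fin.ext_iff]; omega)]
      · rw [if_pos h, if_neg (by simp [Fin.ext_iff]; omega), if_pos (Fin.ext h2)]
    · have h2 := fun e => h ((hq j).2 e)
      rw [if_neg h, if_neg (fun e => h2 (Or.inl (by rw [e]))),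
        if_neg (fun e => h2 (Or.inr (by rw [e])))]
  rw [h1, Finset.sum_add_distrib,
    Finset.sum_ite_eq' Finset.univ (⟨a, ha⟩ : Fin m) (fun _ => (1:ℕ)),
    Finset.sum_ite_eq' Finset.univ (⟨b, hb⟩ : Fin m) (fun _ => (1:ℕ)),
    if_pos (Finset.mem_univ _), if_pos (Finset.mem_univ _)]

lemma count_diag (m a : ℕ) (ha : a < m) (q : Fin m → Prop) [DecidablePred q]
    (hq : ∀ j, q j ↔ j.val = a) :
    (∑ j : Fin m, if q j then 0 else 2) = 2*m - 2 := by
  have h1 : (∑ j : Fin m, if q j then (2:ℕ) else 0) = 2 :=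
    count_onec m 2 a ha q hq
  have h2 : (∑ j : Fin m, (((if q j then (0:ℕ) else 2)) + (if q j then 2 else 0)))
      = ∑ j : Fin m, 2 := by
    refine Finset.sum_congr rfl fun j _ => ?_
    by_cases h : q j <;> simp [h]
  rw [Finset.sum_add_distrib, h1] at h2
  simp only [Finset.sum_const, Finset.card_univ, Fintype.card_fin, smul_eq_mul] at h2
  omega

lemma odds_sum : ∀ n : ℕ, (∑ i ∈ range (2*n), if i % 2 = 1 then 1 else 0) = n := by
  intro n
  induction n with
  | zero => simp
  | succ n ih =>
    have h : 2*(n+1) = (2*n+1)+1 := by ring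
    rw [h, Finset.sum_range_succ, Finset.sum_range_succ]
    rw [if_pos (show (2*n+1) % 2 = 1 by omega), if_neg (show ¬ (2*n) % 2 = 1 by omega)]
    omega

def dg (n : ℕ) : PentV n → ℕ := Sum.elim (fun _ => 3) (Sum.elim (fun _ => 3) (fun _ => 2))

lemma degUU (n : ℕ) (hn : 2 ≤ n) (i : Fin (2*n)) :
    (∑ j : Fin (2*n), if cylAdj n (Sum.inl i) (Sum.inl j) = true then 1 else 0) = 2 := by
  have hb := i.isLt
  rcases eq_or_ne i.val 0 with h0 | h0
  · apply count_two (2*n) 1 (2*n-1) (by omega) (by omega) (by omega)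
    intro j; have := j.isLt; simp only [cylAdj, decide_eq_true_eq]; omega
  · rcases eq_or_ne i.val (2*n-1) with h1 | h1
    · apply count_two (2*n) (2*n-2) 0 (by omega) (by omega) (by omega)
      intro j; have := j.isLt; simp only [cylAdj, decide_eq_true_eq]; omega
    · apply count_two (2*n) (i.val+1) (i.val-1) (by omega) (by omega) (by omega)
      intro j; have := j.isLt; simp only [cylAdj, decide_eq_true_eq]; omega

lemma degLL (n : ℕ) (hn : 2 ≤ n) (i : Fin (2*n)) :
    (∑ j : Fin (2*n), if cylAdj n (Sum.inr (Sum.inl i)) (Sum.inr (Sum.inl j)) = true then 1 else 0) = 2 := by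
  have hb := i.isLt
  rcases eq_or_ne i.val 0 with h0 | h0
  · apply count_two (2*n) 1 (2*n-1) (by omega) (by omega) (by omega)
    intro j; have := j.isLt; simp only [cylAdj, decide_eq_true_eq]; omega
  · rcases eq_or_ne i.val (2*n-1) with h1 | h1
    · apply count_two (2*n) (2*n-2) 0 (by omega) (by omega) (by omega)
      intro j; have := j.isLt; simp only [cylAdj, decide_eq_true_eq]; omega
    · apply count_two (2*n) (i.val+1) (i.val-1) (by omega) (by omega) (by omega)
      intro j; have := j.isLt; simp only [cylAdj, decide_eq_true_eq]; omega

lemma degUL (n : ℕ) (hn : 2 ≤ n) (i : Fin (2*n)) :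
    (∑ j : Fin (2*n), if cylAdj n (Sum.inl i) (Sum.inr (Sum.inl j)) = true then 1 else 0)
    = (if i.val % 2 = 0 then 1 else 0) := by
  have hb := i.isLt
  by_cases hp : i.val % 2 = 0
  · rw [if_pos hp]
    apply count_onec (2*n) 1 i.val hb
    intro j; have := j.isLt; simp only [cylAdj, decide_eq_true_eq]; omega
  · rw [if_neg hp]
    apply count_zero
    intro j; simp only [cylAdj, decide_eq_true_eq]; omega

lemma degLU (n : ℕ) (hn : 2 ≤ n) (i : Fin (2*n)) :
    (∑ j : Fin (2*n), if cylAdj n (Sum.inr (Sum.inl i)) (Sum.inl j) = true then 1 else 0)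
    = (if i.val % 2 = 0 then 1 else 0) := by
  have hb := i.isLt
  by_cases hp : i.val % 2 = 0
  · rw [if_pos hp]
    apply count_onec (2*n) 1 i.val hb
    intro j; have := j.isLt; simp only [cylAdj, decide_eq_true_eq]; omega
  · rw [if_neg hp]
    apply count_zero
    intro j; simp only [cylAdj, decide_eq_true_eq]; omega

lemma degUW (n : ℕ) (hn : 2 ≤ n) (i : Fin (2*n)) :
    (∑ k : Fin n, if cylAdj n (Sum.inl i) (Sum.inr (Sum.inr k)) = true then 1 else 0)
    = (if i.val % 2 = 0 then 0 else 1) := by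
  have hb := i.isLt
  by_cases hp : i.val % 2 = 0
  · rw [if_pos hp]
    apply count_zero
    intro j; simp only [cylAdj, decide_eq_true_eq]; omega
  · rw [if_neg hp]
    apply count_onec n 1 ((i.val-1)/2) (by omega)
    intro j; have := j.isLt; simp only [cylAdj, decide_eq_true_eq]; omega

lemma degLW (n : ℕ) (hn : 2 ≤ n) (i : Fin (2*n)) :
    (∑ k : Fin n, if cylAdj n (Sum.inr (Sum.inl i)) (Sum.inr (Sum.inr k)) = true then 1 else 0)
    = (if i.val % 2 = 0 then 0 else 1) := by
  have hb := i.isLt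
  by_cases hp : i.val % 2 = 0
  · rw [if_pos hp]
    apply count_zero
    intro j; simp only [cylAdj, decide_eq_true_eq]; omega
  · rw [if_neg hp]
    apply count_onec n 1 ((i.val-1)/2) (by omega)
    intro j; have := j.isLt; simp only [cylAdj, decide_eq_true_eq]; omega

lemma degWU (n : ℕ) (hn : 2 ≤ n) (i : Fin n) :
    (∑ j : Fin (2*n), if cylAdj n (Sum.inr (Sum.inr i)) (Sum.inl j) = true then 1 else 0) = 1 := by
  have hb := i.isLt
  apply count_onec (2*n) 1 (2*i.val+1) (by omega)
  intro j; have := j.isLt; simp only [cylAdj, decide_eq_true_eq]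

lemma degWL (n : ℕ) (hn : 2 ≤ n) (i : Fin n) :
    (∑ j : Fin (2*n), if cylAdj n (Sum.inr (Sum.inr i)) (Sum.inr (Sum.inl j)) = true then 1 else 0) = 1 := by
  have hb := i.isLt
  apply count_onec (2*n) 1 (2*i.val+1) (by omega)
  intro j; have := j.isLt; simp only [cylAdj, decide_eq_true_eq]

lemma degWW (n : ℕ) (i : Fin n) :
    (∑ k : Fin n, if cylAdj n (Sum.inr (Sum.inr i)) (Sum.inr (Sum.inr k)) = true then 1 else 0) = 0 := by
  apply count_zero
  intro j; simp only [cylAdj]; simp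

lemma deg_eq (n : ℕ) (hn : 2 ≤ n) (x : PentV n) :
    pentDeg n (cylAdj n) x = dg n x := by
  unfold pentDeg
  rw [Finset.card_filter, Fintype.sum_sum_type, Fintype.sum_sum_type]
  rcases x with i | i | i
  · rw [degUU n hn i, degUL n hn i, degUW n hn i]
    simp only [dg, Sum.elim_inl]
    split_ifs <;> omega
  · rw [degLU n hn i, degLL n hn i, degLW n hn i]
    simp only [dg, Sum.elim_inr, Sum.elim_inl]
    split_ifs <;> omega
  · rw [degWU n hn i, degWL n hn i, degWW n i]
    simp only [dg, Sum.elim_inr]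
    omega

lemma cyc_comm (m a b : ℕ) : cyc m a b = cyc m b a := by
  simp only [cyc, Nat.max_comm, Nat.min_comm]

lemma cyc_self (m a : ℕ) : cyc m a a = 0 := by simp [cyc]

lemma minsum : ∀ m : ℕ, ∑ i ∈ range m, min i (m - i) = m^2/4 := by
  intro m
  induction m using Nat.strong_induction_on with
  | _ m ih =>
    match m with
    | 0 => simp
    | 1 => simp
    | (k+2) =>
      have hk := ih k (by omega)
      have step : ∑ i ∈ range (k+2), min i (k+2-i)
          = (∑ i ∈ range k, min i (k - i)) + (k+1) := by
        rw [Finset.sum_range_succ' (fun i => min i (k+2-i)) (k+1)]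
        rw [Finset.sum_range_succ (fun j => min (j+1) (k+2-(j+1))) k]
        have hcongr : ∑ j ∈ range k, min (j+1) (k+2-(j+1))
            = ∑ j ∈ range k, (min j (k-j) + 1) := by
          refine Finset.sum_congr rfl fun j hj => ?_
          rw [Finset.mem_range] at hj
          omega
        rw [hcongr, Finset.sum_add_distrib]
        simp
        omega
      rw [step, hk]
      have h2 : (k+2)^2 = k^2 + (4*k+4) := by ring
      rw [h2]
      generalize k^2 = K
      omega

lemma cycsum (m t : ℕ) (ht : t < m) :
    ∑ i ∈ range m, cyc m i t = m^2/4 := by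
  rw [← minsum m]
  refine Finset.sum_nbij' (fun i => (i + (m - t)) % m) (fun j => (j + t) % m) ?_ ?_ ?_ ?_ ?_
  · intro a ha
    rw [Finset.mem_range] at *
    exact Nat.mod_lt _ (by omega)
  · intro a ha
    rw [Finset.mem_range] at *
    exact Nat.mod_lt _ (by omega)
  · intro a ha
    rw [Finset.mem_range] at ha
    rw [Nat.mod_add_mod]
    have : a + (m - t) + t = a + m := by omega
    rw [this, Nat.add_mod_right, Nat.mod_eq_of_lt ha]
  · intro a ha
    rw [Finset.mem_range] at ha
    rw [Nat.mod_add_mod]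
    have : a + t + (m - t) = a + m := by omega
    rw [this, Nat.add_mod_right, Nat.mod_eq_of_lt ha]
  · intro i hi
    rw [Finset.mem_range] at hi
    by_cases h : i + (m - t) < m
    · rw [Nat.mod_eq_of_lt h]
      simp only [cyc]
      omega
    · have h2 : i + (m - t) - m < m := by omega
      rw [Nat.mod_eq_sub_mod (by omega), Nat.mod_eq_of_lt h2]
      simp only [cyc]
      omega

lemma sq_half (n : ℕ) : (2*n)^2/4 = n^2 := by
  have h : (2*n)^2 = 4*n^2 := by ring
  rw [h]
  exact Nat.mul_div_cancel_left _ (by norm_num)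

lemma cyc_col (m t : ℕ) (ht : t < m) : ∑ j : Fin m, cyc m j.val t = m^2/4 := by
  rw [Fin.sum_univ_eq_sum_range (fun i => cyc m i t)]
  exact cycsum m t ht

lemma cyc_row (m t : ℕ) (ht : t < m) : ∑ j : Fin m, cyc m t j.val = m^2/4 := by
  rw [Finset.sum_congr rfl fun j _ => cyc_comm m t j.val]
  exact cyc_col m t ht

lemma oddcount (n : ℕ) : ∑ x : Fin (2*n), (if x.val % 2 = 1 then 1 else 0) = n := by
  rw [Fin.sum_univ_eq_sum_range (fun i => if i % 2 = 1 then 1 else 0)]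
  exact odds_sum n

lemma blockD1 (n : ℕ) (hn : 2 ≤ n) :
    ∑ x : Fin (2*n), ∑ y : Fin (2*n), 3 * 3 * cyc (2*n) x.val y.val = 18*n^3 := by
  have e : ∀ x : Fin (2*n), ∑ y : Fin (2*n), 3 * 3 * cyc (2*n) x.val y.val = 9*n^2 := by
    intro x
    rw [← Finset.mul_sum, cyc_row (2*n) x.val x.isLt, sq_half]
  rw [Finset.sum_congr rfl fun x _ => e x, Finset.sum_const, Finset.card_univ,
    Fintype.card_fin, smul_eq_mul]
  ring

lemma blockD2 (n : ℕ) (hn : 2 ≤ n) :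
    ∑ x : Fin (2*n), ∑ y : Fin (2*n),
        3 * 3 * (cyc (2*n) x.val y.val + 1 + if x.val = y.val ∧ x.val % 2 = 1 then 1 else 0)
      = 18*n^3 + 36*n^2 + 9*n := by
  have e : ∀ x : Fin (2*n), ∑ y : Fin (2*n),
      3 * 3 * (cyc (2*n) x.val y.val + 1 + if x.val = y.val ∧ x.val % 2 = 1 then 1 else 0)
      = 9*n^2 + 18*n + 9*(if x.val % 2 = 1 then 1 else 0) := by
    intro x
    rw [← Finset.mul_sum, Finset.sum_add_distrib, Finset.sum_add_distrib,
      cyc_row (2*n) x.val x.isLt, sq_half]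
    have hite : (∑ y : Fin (2*n), if x.val = y.val ∧ x.val % 2 = 1 then 1 else 0)
        = (if x.val % 2 = 1 then 1 else 0) := by
      by_cases hp : x.val % 2 = 1
      · rw [if_pos hp]
        apply count_onec (2*n) 1 x.val x.isLt
        intro j; omega
      · rw [if_neg hp]
        apply count_zero
        intro j; omega
    rw [hite]
    simp only [Finset.sum_const, Finset.card_univ, Fintype.card_fin, smul_eq_mul]
    ring
  rw [Finset.sum_congr rfl fun x _ => e x]
  rw [Finset.sum_add_distrib, Finset.sum_const, Finset.card_univ, Fintype.card_fin,
    smul_eq_mul, ← Finset.mul_sum, oddcount]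
  ring

lemma blockD3 (n : ℕ) (hn : 2 ≤ n) :
    ∑ x : Fin (2*n), ∑ y : Fin n, 3 * 2 * (cyc (2*n) (x.val) (2 * y.val + 1) + 1)
      = 6*n^3 + 12*n^2 := by
  rw [Finset.sum_comm]
  have e : ∀ y : Fin n, ∑ x : Fin (2*n), 3 * 2 * (cyc (2*n) (x.val) (2 * y.val + 1) + 1)
      = 6*n^2 + 12*n := by
    intro y
    rw [← Finset.mul_sum, Finset.sum_add_distrib,
      cyc_col (2*n) (2*y.val+1) (by have := y.isLt; omega), sq_half]
    simp only [Finset.sum_const, Finset.card_univ, Fintype.card_fin, smul_eq_mul]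
    ring
  rw [Finset.sum_congr rfl fun y _ => e y, Finset.sum_const, Finset.card_univ,
    Fintype.card_fin, smul_eq_mul]
  ring

lemma blockD4 (n : ℕ) (hn : 2 ≤ n) :
    ∑ x : Fin n, ∑ y : Fin (2*n), 2 * 3 * (cyc (2*n) (2 * x.val + 1) y.val + 1)
      = 6*n^3 + 12*n^2 := by
  have e : ∀ x : Fin n, ∑ y : Fin (2*n), 2 * 3 * (cyc (2*n) (2 * x.val + 1) y.val + 1)
      = 6*n^2 + 12*n := by
    intro x
    rw [← Finset.mul_sum, Finset.sum_add_distrib,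
      cyc_row (2*n) (2*x.val+1) (by have := x.isLt; omega), sq_half]
    simp only [Finset.sum_const, Finset.card_univ, Fintype.card_fin, smul_eq_mul]
    ring
  rw [Finset.sum_congr rfl fun x _ => e x, Finset.sum_const, Finset.card_univ,
    Fintype.card_fin, smul_eq_mul]
  ring

lemma blockD5 (n : ℕ) (hn : 2 ≤ n) :
    ∑ x : Fin n, ∑ y : Fin n,
        2 * 2 * (if x.val = y.val then 0 else cyc (2*n) (2 * x.val + 1) (2 * y.val + 1) + 2)
      = n * (8*(n^2/4) + (8*n - 8)) := by
  have e : ∀ x : Fin n, ∑ y : Fin n,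
      2 * 2 * (if x.val = y.val then 0 else cyc (2*n) (2 * x.val + 1) (2 * y.val + 1) + 2)
      = 8*(n^2/4) + (8*n - 8) := by
    intro x
    have ept : ∀ y : Fin n,
        (if x.val = y.val then 0 else cyc (2*n) (2 * x.val + 1) (2 * y.val + 1) + 2)
        = 2 * cyc n x.val y.val + (if x.val = y.val then 0 else 2) := by
      intro y
      by_cases h : x.val = y.val
      · rw [if_pos h, if_pos h, h, cyc_self]
      · rw [if_neg h, if_neg h]
        have h1 := x.isLt; have h2 := y.isLt
        simp only [cyc]
        omega
    rw [Finset.sum_congr rfl fun y _ => congrArg (2 * 2 * ·) (ept y)]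
    rw [← Finset.mul_sum, Finset.sum_add_distrib, ← Finset.mul_sum,
      cyc_row n x.val x.isLt]
    have hdiag : (∑ y : Fin n, if x.val = y.val then 0 else 2) = 2*n - 2 := by
      apply count_diag n x.val x.isLt
      intro j; omega
    rw [hdiag]
    have hq := Nat.div_le_self (n^2) 4
    have hq2 : n^2/4 ≤ n*n := by
      calc n^2/4 ≤ n^2 := Nat.div_le_self _ _
        _ = n*n := by ring
    omega
  rw [Finset.sum_congr rfl fun x _ => e x, Finset.sum_const, Finset.card_univ,
    Fintype.card_fin, smul_eq_mul]

lemma total (n : ℕ) (hn : 2 ≤ n) :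
    (∑ x : PentV n, ∑ y : PentV n, dg n x * dg n y * pdist n x y)
      = (if n % 2 = 0 then 98*n^3 + 128*n^2 + 10*n else 98*n^3 + 128*n^2 + 8*n) := by
  simp only [Fintype.sum_sum_type, dg, Sum.elim_inl, Sum.elim_inr, pdist]
  simp only [Finset.sum_add_distrib]
  rw [blockD1 n hn, blockD2 n hn, blockD3 n hn, blockD4 n hn, blockD5 n hn]
  rcases Nat.even_or_odd n with ⟨a, rfl⟩ | ⟨a, rfl⟩
  · rw [if_pos (by omega)]
    obtain ⟨b, rfl⟩ : ∃ b, a = b + 1 := ⟨a - 1, by omega⟩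
    have h4 : (b+1+(b+1))^2/4 = (b+1)*(b+1) := by
      have h : (b+1+(b+1))^2 = 4*((b+1)*(b+1)) := by ring
      rw [h]
      exact Nat.mul_div_cancel_left _ (by norm_num)
    rw [h4, show 8 * (b + 1 + (b + 1)) - 8 = 16 * b + 8 from by omega]
    ring
  · rw [if_neg (by omega)]
    have h4 : (2*a+1)^2/4 = a*a+a := by
      have h : (2*a+1)^2 = 4*(a*a+a)+1 := by ring
      rw [h]
      omega
    rw [h4, show 8 * (2*a+1) - 8 = 16 * a from by omega]
    ring

/-- The Gutman index of the pentagonal cylinder chain `P_n` (`n ≥ 2`):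
`(1/2) Σ_u Σ_v d_u d_v dist(u,v)` equals `49n³ + 64n² + 5n` for even `n`
and `49n³ + 64n² + 4n` for odd `n`. -/
theorem gutman_pentagonal_cylinder (n : ℕ) (hn : 2 ≤ n) :
    (1 / 2 : ℚ) * ∑ u : PentV n, ∑ v : PentV n,
        (pentDeg n (cylAdj n) u : ℚ) * (pentDeg n (cylAdj n) v : ℚ) *
          ((cylGraph n).dist u v : ℚ) =
      if Even n then 49 * (n : ℚ) ^ 3 + 64 * (n : ℚ) ^ 2 + 5 * (n : ℚ)
      else 49 * (n : ℚ) ^ 3 + 64 * (n : ℚ) ^ 2 + 4 * (n : ℚ) := by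
  have hrw : ∀ u v : PentV n,
      (pentDeg n (cylAdj n) u : ℚ) * (pentDeg n (cylAdj n) v : ℚ) *
        ((cylGraph n).dist u v : ℚ)
      = ((dg n u * dg n v * pdist n u v : ℕ) : ℚ) := by
    intro u v
    rw [deg_eq n hn u, deg_eq n hn v, dist_eq_pdist n hn u v]
    push_cast
    ring
  have hsum : (∑ u : PentV n, ∑ v : PentV n,
      (pentDeg n (cylAdj n) u : ℚ) * (pentDeg n (cylAdj n) v : ℚ) *
        ((cylGraph n).dist u v : ℚ))
      = ((∑ u : PentV n, ∑ v : PentV n, dg n u * dg n v * pdist n u v : ℕ) : ℚ) := by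
    rw [Nat.cast_sum]
    refine Finset.sum_congr rfl fun u _ => ?_
    rw [Nat.cast_sum]
    exact Finset.sum_congr rfl fun v _ => hrw u v
  rw [hsum, total n hn]
  rcases Nat.even_or_odd n with he | ho
  · rw [if_pos (Nat.even_iff.mp he), if_pos he]
    push_cast
    ring
  · have h1 := Nat.odd_iff.mp ho
    rw [if_neg (by omega : ¬ n % 2 = 0), if_neg (by simp [Nat.even_iff, h1] : ¬ Even n)]
    push_cast
    ring
end

section
/- For every integer n ≥ 2, the Schultz index of the pentagonal cylinder chain P_n equals 35n³ + 48n² + 2n if n is even, and 35n³ + 48n² + n if n is odd. That is, (1/2)·Σ_{u∈V}Σ_{v∈V} (d_u + d_v)·dist(u,v) equals the stated value, where dist is the graph (shortest-path) distance in P_n. -/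
open Matrix Real Finset

set_option maxHeartbeats 1600000

set_option maxHeartbeats 1600000
/-- circular distance -/
def cdist (N a b : ℕ) : ℕ := min ((a - b) + (b - a)) (N - ((a - b) + (b - a)))

def Dp (n : ℕ) : PentV n → PentV n → ℕ
  | Sum.inl i, Sum.inl j => cdist (2*n) i.val j.val
  | Sum.inl i, Sum.inr (Sum.inl j) =>
      if i.val = j.val ∧ i.val % 2 = 1 then 2 else cdist (2*n) i.val j.val + 1
  | Sum.inl i, Sum.inr (Sum.inr k) => cdist (2*n) i.val (2*k.val+1) + 1
  | Sum.inr (Sum.inl i), Sum.inl j =>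
      if i.val = j.val ∧ i.val % 2 = 1 then 2 else cdist (2*n) i.val j.val + 1
  | Sum.inr (Sum.inl i), Sum.inr (Sum.inl j) => cdist (2*n) i.val j.val
  | Sum.inr (Sum.inl i), Sum.inr (Sum.inr k) => cdist (2*n) i.val (2*k.val+1) + 1
  | Sum.inr (Sum.inr k), Sum.inl j => cdist (2*n) (2*k.val+1) j.val + 1
  | Sum.inr (Sum.inr k), Sum.inr (Sum.inl j) => cdist (2*n) (2*k.val+1) j.val + 1
  | Sum.inr (Sum.inr k), Sum.inr (Sum.inr m) =>
      if k.val = m.val then 0 else cdist (2*n) (2*k.val+1) (2*m.val+1) + 2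

lemma Dp_eq_zero (n : ℕ) {x y : PentV n} (h : Dp n x y = 0) : x = y := by
  rcases x with ⟨i, hi⟩ | ⟨i, hi⟩ | ⟨i, hi⟩ <;> rcases y with ⟨j, hj⟩ | ⟨j, hj⟩ | ⟨j, hj⟩ <;>
    simp only [Dp, cdist] at h
  case inl.inl => exact congrArg Sum.inl (Fin.ext (show i = j by omega))
  case inl.inr.inl => exfalso; split_ifs at h <;> omega
  case inl.inr.inr => exfalso; omega
  case inr.inl.inl => exfalso; split_ifs at h <;> omega
  case inr.inl.inr.inl => exact congrArg (fun t => Sum.inr (Sum.inl t)) (Fin.ext (show i = j by omega))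
  case inr.inl.inr.inr => exfalso; omega
  case inr.inr.inl => exfalso; omega
  case inr.inr.inr.inl => exfalso; omega
  case inr.inr.inr.inr => exact congrArg (fun t => Sum.inr (Sum.inr t)) (Fin.ext (show i = j by split_ifs at h <;> omega))

lemma Dp_self (n : ℕ) (x : PentV n) : Dp n x x = 0 := by
  rcases x with i | i | i <;> simp [Dp, cdist]

lemma Dp_lip (n : ℕ) (hn : 2 ≤ n) (x z y : PentV n) (h : cylAdj n x z = true) :
    Dp n x y ≤ Dp n z y + 1 := by
  rcases x with ⟨i, hi⟩ | ⟨i, hi⟩ | ⟨i, hi⟩ <;> rcases z with ⟨j, hj⟩ | ⟨j, hj⟩ | ⟨j, hj⟩ <;>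
    simp only [cylAdj, decide_eq_true_eq, Bool.false_eq_true] at h <;>
    rcases y with ⟨t, ht⟩ | ⟨t, ht⟩ | ⟨t, ht⟩ <;>
    simp only [Dp, cdist] <;>
    (try split_ifs) <;> omega
lemma cycle_step (N : ℕ) (hN : 4 ≤ N) (i t : ℕ) (hi : i < N) (ht : t < N) (hne : i ≠ t) :
    ∃ j, j < N ∧ (i + 1 = j ∨ j + 1 = i ∨ (i = 0 ∧ j = N - 1) ∨ (j = 0 ∧ i = N - 1)) ∧
      cdist N j t + 1 = cdist N i t := by
  by_cases hd : cdist N (if i + 1 = N then 0 else i + 1) t + 1 = cdist N i t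
  · refine ⟨if i + 1 = N then 0 else i + 1, ?_, ?_, hd⟩ <;> split_ifs <;> omega
  · have hb : cdist N (if i = 0 then N - 1 else i - 1) t + 1 = cdist N i t := by
      simp only [cdist] at hd ⊢
      split_ifs at hd ⊢ <;> omega
    refine ⟨if i = 0 then N - 1 else i - 1, ?_, ?_, hb⟩ <;> split_ifs <;> omega
lemma Dp_step (n : ℕ) (hn : 2 ≤ n) (x y : PentV n) (hxy : x ≠ y) :
    ∃ z : PentV n, cylAdj n x z = true ∧ Dp n z y + 1 = Dp n x y := by
  have hN : 4 ≤ 2 * n := by omega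
  rcases x with ⟨i, hi⟩ | ⟨i, hi⟩ | ⟨i, hi⟩ <;> rcases y with ⟨t, ht⟩ | ⟨t, ht⟩ | ⟨t, ht⟩
  case inl.inl =>
    have hne : i ≠ t := fun h => hxy (by subst h; rfl)
    obtain ⟨j, hj, hadj, hcd⟩ := cycle_step (2*n) hN i t hi ht hne
    exact ⟨Sum.inl ⟨j, hj⟩, by simp only [cylAdj, decide_eq_true_eq, Fin.val_mk, eq_self_iff_true, true_and, and_true] <;> omega,
      by simp only [Dp, cdist, Fin.val_mk] at hcd ⊢ <;> omega⟩
  case inl.inr.inl =>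
    by_cases h0 : i = t
    · by_cases he : i % 2 = 0
      · refine ⟨Sum.inr (Sum.inl ⟨i, hi⟩), by simp only [cylAdj, decide_eq_true_eq, Fin.val_mk, eq_self_iff_true, true_and, and_true] <;> omega, ?_⟩
        simp only [Dp, cdist, Fin.val_mk] <;> (try split_ifs) <;> omega
      · refine ⟨Sum.inr (Sum.inr ⟨i / 2, by omega⟩), by simp only [cylAdj, decide_eq_true_eq, Fin.val_mk, eq_self_iff_true, true_and, and_true] <;> omega, ?_⟩
        simp only [Dp, cdist, Fin.val_mk] <;> (try split_ifs) <;> omega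
    · by_cases he : i % 2 = 0
      · refine ⟨Sum.inr (Sum.inl ⟨i, hi⟩), by simp only [cylAdj, decide_eq_true_eq, Fin.val_mk, eq_self_iff_true, true_and, and_true] <;> omega, ?_⟩
        simp only [Dp, cdist, Fin.val_mk] <;> (try split_ifs) <;> omega
      · obtain ⟨j, hj, hadj, hcd⟩ := cycle_step (2*n) hN i t hi ht h0
        refine ⟨Sum.inl ⟨j, hj⟩, by simp only [cylAdj, decide_eq_true_eq, Fin.val_mk, eq_self_iff_true, true_and, and_true] <;> omega, ?_⟩
        simp only [Dp, cdist, Fin.val_mk] at hcd ⊢ <;> (try split_ifs) <;> omega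
  case inl.inr.inr =>
    by_cases h0 : i = 2 * t + 1
    · refine ⟨Sum.inr (Sum.inr ⟨t, ht⟩), by simp only [cylAdj, decide_eq_true_eq, Fin.val_mk, eq_self_iff_true, true_and, and_true] <;> omega, ?_⟩
      simp only [Dp, cdist, Fin.val_mk] <;> (try split_ifs) <;> omega
    · obtain ⟨j, hj, hadj, hcd⟩ := cycle_step (2*n) hN i (2*t+1) hi (by omega) h0
      refine ⟨Sum.inl ⟨j, hj⟩, by simp only [cylAdj, decide_eq_true_eq, Fin.val_mk, eq_self_iff_true, true_and, and_true] <;> omega, ?_⟩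
      simp only [Dp, cdist, Fin.val_mk] at hcd ⊢ <;> (try split_ifs) <;> omega
  case inr.inl.inl =>
    by_cases h0 : i = t
    · by_cases he : i % 2 = 0
      · refine ⟨Sum.inl ⟨i, hi⟩, by simp only [cylAdj, decide_eq_true_eq, Fin.val_mk, eq_self_iff_true, true_and, and_true] <;> omega, ?_⟩
        simp only [Dp, cdist, Fin.val_mk] <;> (try split_ifs) <;> omega
      · refine ⟨Sum.inr (Sum.inr ⟨i / 2, by omega⟩), by simp only [cylAdj, decide_eq_true_eq, Fin.val_mk, eq_self_iff_true, true_and, and_true] <;> omega, ?_⟩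
        simp only [Dp, cdist, Fin.val_mk] <;> (try split_ifs) <;> omega
    · by_cases he : i % 2 = 0
      · refine ⟨Sum.inl ⟨i, hi⟩, by simp only [cylAdj, decide_eq_true_eq, Fin.val_mk, eq_self_iff_true, true_and, and_true] <;> omega, ?_⟩
        simp only [Dp, cdist, Fin.val_mk] <;> (try split_ifs) <;> omega
      · obtain ⟨j, hj, hadj, hcd⟩ := cycle_step (2*n) hN i t hi ht h0
        refine ⟨Sum.inr (Sum.inl ⟨j, hj⟩), by simp only [cylAdj, decide_eq_true_eq, Fin.val_mk, eq_self_iff_true, true_and, and_true] <;> omega, ?_⟩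
        simp only [Dp, cdist, Fin.val_mk] at hcd ⊢ <;> (try split_ifs) <;> omega
  case inr.inl.inr.inl =>
    have hne : i ≠ t := fun h => hxy (by subst h; rfl)
    obtain ⟨j, hj, hadj, hcd⟩ := cycle_step (2*n) hN i t hi ht hne
    exact ⟨Sum.inr (Sum.inl ⟨j, hj⟩), by simp only [cylAdj, decide_eq_true_eq, Fin.val_mk, eq_self_iff_true, true_and, and_true] <;> omega,
      by simp only [Dp, cdist, Fin.val_mk] at hcd ⊢ <;> omega⟩
  case inr.inl.inr.inr =>
    by_cases h0 : i = 2 * t + 1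
    · refine ⟨Sum.inr (Sum.inr ⟨t, ht⟩), by simp only [cylAdj, decide_eq_true_eq, Fin.val_mk, eq_self_iff_true, true_and, and_true] <;> omega, ?_⟩
      simp only [Dp, cdist, Fin.val_mk] <;> (try split_ifs) <;> omega
    · obtain ⟨j, hj, hadj, hcd⟩ := cycle_step (2*n) hN i (2*t+1) hi (by omega) h0
      refine ⟨Sum.inr (Sum.inl ⟨j, hj⟩), by simp only [cylAdj, decide_eq_true_eq, Fin.val_mk, eq_self_iff_true, true_and, and_true] <;> omega, ?_⟩
      simp only [Dp, cdist, Fin.val_mk] at hcd ⊢ <;> (try split_ifs) <;> omega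
  case inr.inr.inl =>
    refine ⟨Sum.inl ⟨2*i+1, by omega⟩, by simp only [cylAdj, decide_eq_true_eq, Fin.val_mk, eq_self_iff_true, true_and, and_true] <;> omega, ?_⟩
    simp only [Dp, cdist, Fin.val_mk] <;> (try split_ifs) <;> omega
  case inr.inr.inr.inl =>
    refine ⟨Sum.inr (Sum.inl ⟨2*i+1, by omega⟩), by simp only [cylAdj, decide_eq_true_eq, Fin.val_mk, eq_self_iff_true, true_and, and_true] <;> omega, ?_⟩
    simp only [Dp, cdist, Fin.val_mk] <;> (try split_ifs) <;> omega
  case inr.inr.inr.inr =>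
    have hne : i ≠ t := fun h => hxy (by subst h; rfl)
    refine ⟨Sum.inl ⟨2*i+1, by omega⟩, by simp only [cylAdj, decide_eq_true_eq, Fin.val_mk, eq_self_iff_true, true_and, and_true] <;> omega, ?_⟩
    simp only [Dp, cdist, Fin.val_mk] <;> (try split_ifs) <;> omega
lemma Dp_exists_walk (n : ℕ) (hn : 2 ≤ n) :
    ∀ (m : ℕ) (x y : PentV n), Dp n x y ≤ m → ∃ p : (cylGraph n).Walk x y, p.length ≤ m := by
  intro m
  induction m with
  | zero =>
    intro x y h
    have hxy : x = y := Dp_eq_zero n (Nat.le_zero.mp h)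
    subst hxy
    exact ⟨SimpleGraph.Walk.nil, by simp⟩
  | succ m ih =>
    intro x y h
    by_cases hxy : x = y
    · subst hxy; exact ⟨SimpleGraph.Walk.nil, by simp⟩
    · obtain ⟨z, hadj, hz⟩ := Dp_step n hn x y hxy
      obtain ⟨p, hp⟩ := ih z y (by omega)
      exact ⟨SimpleGraph.Walk.cons (show (cylGraph n).Adj x z from hadj) p, by simp [SimpleGraph.Walk.length_cons]; omega⟩

lemma Dp_le_walk (n : ℕ) (hn : 2 ≤ n) (x y : PentV n) (p : (cylGraph n).Walk x y) :
    Dp n x y ≤ p.length := by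
  induction p with
  | nil => simp [Dp_self]
  | @cons u v w h p ih =>
    have := Dp_lip n hn u v w h
    simp only [SimpleGraph.Walk.length_cons]
    omega

lemma dist_eq_Dp (n : ℕ) (hn : 2 ≤ n) (x y : PentV n) :
    (cylGraph n).dist x y = Dp n x y := by
  obtain ⟨p, hp⟩ := Dp_exists_walk n hn (Dp n x y) x y le_rfl
  have hub : (cylGraph n).dist x y ≤ Dp n x y := le_trans (SimpleGraph.dist_le p) hp
  obtain ⟨q, hq⟩ := SimpleGraph.Reachable.exists_walk_length_eq_dist ⟨p⟩
  have hlb := Dp_le_walk n hn x y q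
  omega



lemma sumU (N : ℕ) : 4 * (∑ m ∈ Finset.range N, (2*m - N)) + (N-1) % 2 = (N-1)^2 := by
  induction N using Nat.strong_induction_on with
  | _ N ih =>
    match N with
    | 0 => simp
    | 1 => simp
    | (n+2) =>
      have h1 : (∑ m ∈ Finset.range (n+2), (2*m - (n+2)))
          = (∑ m ∈ Finset.range n, (2*m - n)) + n := by
        rw [Finset.sum_range_succ' (fun m => 2*m - (n+2)) (n+1)]
        have : ∀ k, 2*(k+1) - (n+2) = 2*k - n := by intro k; omega
        simp only [this]
        rw [Finset.sum_range_succ]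
        omega
      have h2 := ih n (by omega)
      rw [h1]
      rcases n with _ | m
      · simp
      · have e1 : (m+2)^2 = m^2 + 4*m + 4 := by ring
        have e2 : (m+1+2-1) % 2 = (m+1-1) % 2 := by omega
        have e3 : (m+1-1) = m := by omega
        have e4 : (m+1+2-1) = m + 2 := by omega
        rw [e4, e1] at *
        rw [e3] at h2
        have e5 : (m+2) % 2 = m % 2 := by omega
        rw [e5]
        linarith

lemma sumM (N : ℕ) : 4 * (∑ m ∈ Finset.range N, min m (N - m)) + 1 = N^2 + (N+1) % 2 := by
  have hmin : ∀ m ∈ Finset.range N, min m (N-m) = m - (2*m - N) := by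
    intro m hm; rw [Finset.mem_range] at hm; omega
  rw [Finset.sum_congr rfl hmin,
    Finset.sum_tsub_distrib _ (fun m hm => by rw [Finset.mem_range] at hm; omega)]
  have hG := Finset.sum_range_id_mul_two N
  have hU := sumU N
  have hUG : (∑ m ∈ Finset.range N, (2*m - N)) ≤ ∑ m ∈ Finset.range N, m :=
    Finset.sum_le_sum (fun m hm => by rw [Finset.mem_range] at hm; omega)
  rcases N with _ | M
  · simp
  · have e3 : (M+1-1) = M := by omega
    rw [e3] at hU
    have e2 : (M+1)*(M+1-1) = M^2 + M := by rw [e3]; ring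
    rw [e2] at hG
    have e1 : (M+1)^2 = M^2 + 2*M + 1 := by ring
    rw [e1]
    generalize M^2 = q at hU hG ⊢
    omega

lemma rowsum (N k : ℕ) (hk : k < N) :
    ∑ j ∈ Finset.range N, cdist N k j = ∑ j ∈ Finset.range N, min j (N - j) := by
  refine Finset.sum_nbij' (fun m => if k ≤ m then m - k else m + N - k)
    (fun m => if m + k < N then m + k else m + k - N) ?_ ?_ ?_ ?_ ?_ <;>
    intro a ha <;> rw [Finset.mem_range] at ha <;> (try dsimp only) <;>
    first
      | (rw [Finset.mem_range]; split_ifs <;> omega)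
      | (simp only [cdist]; split_ifs <;> omega)
      | (split_ifs <;> omega)

lemma parity_count : ∀ n : ℕ, (∑ i ∈ Finset.range (2*n), if i % 2 = 1 then 1 else 0) = n := by
  intro n
  induction n with
  | zero => simp
  | succ k ih =>
    have h : 2*(k+1) = (2*k) + 1 + 1 := by ring
    rw [h, Finset.sum_range_succ, Finset.sum_range_succ, ih]
    have h1 : (2*k) % 2 = 0 := by omega
    have h2 : (2*k+1) % 2 = 1 := by omega
    rw [if_neg (by omega), if_pos h2]
set_option maxHeartbeats 1600000
lemma deg_u (n : ℕ) (hn : 2 ≤ n) (i : Fin (2*n)) : pentDeg n (cylAdj n) (Sum.inl i) = 3 := by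
  have hi := i.isLt
  rw [pentDeg]
  by_cases hp : i.val % 2 = 0
  · refine Finset.card_eq_three.mpr
      ⟨Sum.inl ⟨if i.val + 1 = 2*n then 0 else i.val + 1, by split_ifs <;> omega⟩,
       Sum.inl ⟨if i.val = 0 then 2*n - 1 else i.val - 1, by split_ifs <;> omega⟩,
       Sum.inr (Sum.inl i), ?_, ?_, ?_, ?_⟩
    · simp only [ne_eq, Sum.inl.injEq, Fin.mk.injEq]; split_ifs <;> omega
    · simp
    · simp
    · ext y
      rcases y with ⟨j, hj⟩ | ⟨j, hj⟩ | ⟨j, hj⟩ <;>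
        simp only [Finset.mem_filter, Finset.mem_univ, true_and] <;>
        simp only [Finset.mem_filter, Finset.mem_univ, true_and, Finset.mem_insert,
          Finset.mem_singleton, cylAdj, decide_eq_true_eq, Sum.inl.injEq, Sum.inr.injEq,
          reduceCtorEq, or_false, false_or, iff_false, iff_true, Fin.mk.injEq, Fin.ext_iff, Fin.val_mk] <;>
        (try split_ifs) <;> omega
  · obtain ⟨k, hk2⟩ : ∃ k, i.val = 2*k+1 := ⟨i.val/2, by omega⟩
    refine Finset.card_eq_three.mpr
      ⟨Sum.inl ⟨if i.val + 1 = 2*n then 0 else i.val + 1, by split_ifs <;> omega⟩,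
       Sum.inl ⟨if i.val = 0 then 2*n - 1 else i.val - 1, by split_ifs <;> omega⟩,
       Sum.inr (Sum.inr ⟨k, by omega⟩), ?_, ?_, ?_, ?_⟩
    · simp only [ne_eq, Sum.inl.injEq, Fin.mk.injEq]; split_ifs <;> omega
    · simp
    · simp
    · ext y
      rcases y with ⟨j, hj⟩ | ⟨j, hj⟩ | ⟨j, hj⟩ <;>
        simp only [Finset.mem_filter, Finset.mem_univ, true_and] <;>
        simp only [Finset.mem_filter, Finset.mem_univ, true_and, Finset.mem_insert,
          Finset.mem_singleton, cylAdj, decide_eq_true_eq, Sum.inl.injEq, Sum.inr.injEq,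
          reduceCtorEq, or_false, false_or, iff_false, iff_true, Fin.mk.injEq, Fin.ext_iff, Fin.val_mk] <;>
        (try split_ifs) <;> omega

lemma deg_l (n : ℕ) (hn : 2 ≤ n) (i : Fin (2*n)) : pentDeg n (cylAdj n) (Sum.inr (Sum.inl i)) = 3 := by
  have hi := i.isLt
  rw [pentDeg]
  by_cases hp : i.val % 2 = 0
  · refine Finset.card_eq_three.mpr
      ⟨Sum.inr (Sum.inl ⟨if i.val + 1 = 2*n then 0 else i.val + 1, by split_ifs <;> omega⟩),
       Sum.inr (Sum.inl ⟨if i.val = 0 then 2*n - 1 else i.val - 1, by split_ifs <;> omega⟩),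
       Sum.inl i, ?_, ?_, ?_, ?_⟩
    · simp only [ne_eq, Sum.inr.injEq, Sum.inl.injEq, Fin.mk.injEq]; split_ifs <;> omega
    · simp
    · simp
    · ext y
      rcases y with ⟨j, hj⟩ | ⟨j, hj⟩ | ⟨j, hj⟩ <;>
        simp only [Finset.mem_filter, Finset.mem_univ, true_and] <;>
        simp only [Finset.mem_filter, Finset.mem_univ, true_and, Finset.mem_insert,
          Finset.mem_singleton, cylAdj, decide_eq_true_eq, Sum.inl.injEq, Sum.inr.injEq,
          reduceCtorEq, or_false, false_or, iff_false, iff_true, Fin.mk.injEq, Fin.ext_iff, Fin.val_mk] <;>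
        (try split_ifs) <;> omega
  · obtain ⟨k, hk2⟩ : ∃ k, i.val = 2*k+1 := ⟨i.val/2, by omega⟩
    refine Finset.card_eq_three.mpr
      ⟨Sum.inr (Sum.inl ⟨if i.val + 1 = 2*n then 0 else i.val + 1, by split_ifs <;> omega⟩),
       Sum.inr (Sum.inl ⟨if i.val = 0 then 2*n - 1 else i.val - 1, by split_ifs <;> omega⟩),
       Sum.inr (Sum.inr ⟨k, by omega⟩), ?_, ?_, ?_, ?_⟩
    · simp only [ne_eq, Sum.inr.injEq, Sum.inl.injEq, Fin.mk.injEq]; split_ifs <;> omega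
    · simp
    · simp
    · ext y
      rcases y with ⟨j, hj⟩ | ⟨j, hj⟩ | ⟨j, hj⟩ <;>
        simp only [Finset.mem_filter, Finset.mem_univ, true_and] <;>
        simp only [Finset.mem_filter, Finset.mem_univ, true_and, Finset.mem_insert,
          Finset.mem_singleton, cylAdj, decide_eq_true_eq, Sum.inl.injEq, Sum.inr.injEq,
          reduceCtorEq, or_false, false_or, iff_false, iff_true, Fin.mk.injEq, Fin.ext_iff, Fin.val_mk] <;>
        (try split_ifs) <;> omega

lemma deg_w (n : ℕ) (hn : 2 ≤ n) (k : Fin n) : pentDeg n (cylAdj n) (Sum.inr (Sum.inr k)) = 2 := by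
  have hk := k.isLt
  rw [pentDeg]
  refine Finset.card_eq_two.mpr
    ⟨Sum.inl ⟨2*k.val+1, by omega⟩, Sum.inr (Sum.inl ⟨2*k.val+1, by omega⟩), by simp, ?_⟩
  ext y
  rcases y with ⟨j, hj⟩ | ⟨j, hj⟩ | ⟨j, hj⟩ <;>
    simp only [Finset.mem_filter, Finset.mem_univ, true_and] <;>
    simp only [Finset.mem_filter, Finset.mem_univ, true_and, Finset.mem_insert,
      Finset.mem_singleton, cylAdj, decide_eq_true_eq, Sum.inl.injEq, Sum.inr.injEq,
      reduceCtorEq, or_false, false_or, iff_false, iff_true, Fin.mk.injEq, Fin.ext_iff, Fin.val_mk,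
      Bool.false_eq_true] <;>
    omega
lemma cdist_comm (N a b : ℕ) : cdist N a b = cdist N b a := by
  simp only [cdist]; omega

lemma main_sum (n : ℕ) (hn : 2 ≤ n) :
    (∑ u : PentV n, ∑ v : PentV n,
      (pentDeg n (cylAdj n) u + pentDeg n (cylAdj n) v) * Dp n u v)
    = 68*n^3 + 96*n^2 + 4*n + 8 * n * (∑ m ∈ Finset.range n, min m (n - m)) := by
  have hM2 : (∑ m ∈ Finset.range (2*n), min m (2*n - m)) = n^2 := by
    have h := sumM (2*n)
    have h1 : (2*n+1) % 2 = 1 := by omega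
    have h2 : (2*n)^2 = 4*n^2 := by ring
    rw [h1, h2] at h
    generalize (n^2 : ℕ) = q at h ⊢
    omega
  have hrow : ∀ t, t < 2*n → (∑ j : Fin (2*n), cdist (2*n) t j.val) = n^2 := by
    intro t ht
    rw [Fin.sum_univ_eq_sum_range (fun j => cdist (2*n) t j) (2*n), rowsum (2*n) t ht, hM2]
  have hrow' : ∀ t, t < 2*n → (∑ j : Fin (2*n), cdist (2*n) j.val t) = n^2 := by
    intro t ht
    rw [Finset.sum_congr rfl (fun (j : Fin (2*n)) _ => cdist_comm (2*n) j.val t), hrow t ht]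
  have hoddrow : ∀ k : Fin n, (∑ m : Fin n, cdist (2*n) (2*k.val+1) (2*m.val+1))
      = 2 * (∑ m ∈ Finset.range n, min m (n - m)) := by
    intro k
    rw [Fin.sum_univ_eq_sum_range (fun m => cdist (2*n) (2*k.val+1) (2*m+1)) n]
    have hpt : ∀ m ∈ Finset.range n, cdist (2*n) (2*k.val+1) (2*m+1) = 2 * cdist n k.val m := by
      intro m hm; rw [Finset.mem_range] at hm; have := k.isLt; simp only [cdist]; omega
    rw [Finset.sum_congr rfl hpt, ← Finset.mul_sum, rowsum n k.val k.isLt]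
  have hUU : ∀ i : Fin (2*n), (∑ j : Fin (2*n), (3+3) * cdist (2*n) i.val j.val) = 6 * n^2 := by
    intro i; rw [← Finset.mul_sum, hrow i.val i.isLt]
  have hUL : ∀ i : Fin (2*n),
      (∑ j : Fin (2*n), (3+3) * if i.val = j.val ∧ i.val % 2 = 1 then 2 else cdist (2*n) i.val j.val + 1)
        = 6*n^2 + 12*n + (if i.val % 2 = 1 then 6 else 0) := by
    intro i
    have hsplit : ∀ j : Fin (2*n), ((3+3) * if i.val = j.val ∧ i.val % 2 = 1 then 2 else cdist (2*n) i.val j.val + 1)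
        = 6 * cdist (2*n) i.val j.val + 6 + (if i = j then (if i.val % 2 = 1 then 6 else 0) else 0) := by
      intro j
      by_cases h1 : i = j
      · subst h1; simp only [cdist, eq_self_iff_true, if_true, true_and]; (try split_ifs) <;> omega
      · have hne : i.val ≠ j.val := fun hc => h1 (Fin.ext hc)
        rw [if_neg (fun hc => hne hc.1), if_neg h1]
        simp only [cdist]; omega
    rw [Finset.sum_congr rfl (fun j _ => hsplit j)]
    rw [Finset.sum_add_distrib, Finset.sum_add_distrib, ← Finset.mul_sum, hrow i.val i.isLt,
      Fintype.sum_ite_eq i (fun _ => if i.val % 2 = 1 then 6 else 0), Finset.sum_const,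
      Finset.card_univ, Fintype.card_fin, smul_eq_mul]
    omega
  have hUW : ∀ k : Fin n, (∑ j : Fin (2*n), (3+2) * (cdist (2*n) j.val (2*k.val+1) + 1)) = 5*n^2 + 10*n := by
    intro k
    rw [← Finset.mul_sum, Finset.sum_add_distrib, hrow' (2*k.val+1) (by have := k.isLt; omega),
      Finset.sum_const, Finset.card_univ, Fintype.card_fin, smul_eq_mul]
    ring
  have hWU : ∀ k : Fin n, (∑ j : Fin (2*n), (2+3) * (cdist (2*n) (2*k.val+1) j.val + 1)) = 5*n^2 + 10*n := by
    intro k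
    rw [← Finset.mul_sum, Finset.sum_add_distrib, hrow (2*k.val+1) (by have := k.isLt; omega),
      Finset.sum_const, Finset.card_univ, Fintype.card_fin, smul_eq_mul]
    ring
  have hWW : ∀ k : Fin n,
      (∑ m : Fin n, (2+2) * if k.val = m.val then 0 else cdist (2*n) (2*k.val+1) (2*m.val+1) + 2)
        = 8 * (∑ m ∈ Finset.range n, min m (n - m)) + 8*(n-1) := by
    intro k
    have hsplit : ∀ m : Fin n, ((2+2) * if k.val = m.val then 0 else cdist (2*n) (2*k.val+1) (2*m.val+1) + 2)
        = 4 * cdist (2*n) (2*k.val+1) (2*m.val+1) + 8 - (if k = m then 8 else 0) := by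
      intro m
      by_cases h1 : k = m
      · subst h1; simp only [cdist, eq_self_iff_true, if_true, true_and]; (try split_ifs) <;> omega
      · have hne : k.val ≠ m.val := fun hc => h1 (Fin.ext hc)
        rw [if_neg hne, if_neg h1]
        simp only [cdist]; omega
    rw [Finset.sum_congr rfl (fun m _ => hsplit m)]
    rw [Finset.sum_tsub_distrib _ (fun m _ => by split_ifs <;> omega),
      Finset.sum_add_distrib, ← Finset.mul_sum, hoddrow k,
      Fintype.sum_ite_eq k (fun _ => 8), Finset.sum_const,
      Finset.card_univ, Fintype.card_fin, smul_eq_mul]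
    omega
  have hparity : (∑ i : Fin (2*n), if i.val % 2 = 1 then 6 else 0) = 6 * n := by
    rw [Fin.sum_univ_eq_sum_range (fun i => if i % 2 = 1 then 6 else 0) (2*n)]
    have : ∀ i ∈ Finset.range (2*n), (if i % 2 = 1 then (6:ℕ) else 0) = 6 * (if i % 2 = 1 then 1 else 0) := by
      intro i _; split_ifs <;> omega
    rw [Finset.sum_congr rfl this, ← Finset.mul_sum, parity_count n]
  simp only [Fintype.sum_sum_type, deg_u n hn, deg_l n hn, deg_w n hn, Dp]
  simp only [Finset.sum_add_distrib]
  rw [Finset.sum_comm (f := fun (x : Fin (2*n)) (y : Fin n) => (3+2) * (cdist (2*n) x.val (2*y.val+1) + 1))]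
  simp only [hUU, hUL, hUW, hWU, hWW]
  simp only [Finset.sum_add_distrib, hparity, Finset.sum_const, Finset.card_univ,
    Fintype.card_fin, smul_eq_mul]
  have h1n : (1:ℕ) ≤ n := by omega
  zify [h1n]
  ring

/-- The Schultz index of the pentagonal cylinder chain `P_n` (`n ≥ 2`):
`(1/2) Σ_u Σ_v (d_u + d_v) dist(u,v)` equals `35n³ + 48n² + 2n` for even `n`
and `35n³ + 48n² + n` for odd `n`. -/
theorem schultz_pentagonal_cylinder (n : ℕ) (hn : 2 ≤ n) :
    (1 / 2 : ℚ) * ∑ u : PentV n, ∑ v : PentV n,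
        ((pentDeg n (cylAdj n) u : ℚ) + (pentDeg n (cylAdj n) v : ℚ)) *
          ((cylGraph n).dist u v : ℚ) =
      if Even n then 35 * (n : ℚ) ^ 3 + 48 * (n : ℚ) ^ 2 + 2 * (n : ℚ)
      else 35 * (n : ℚ) ^ 3 + 48 * (n : ℚ) ^ 2 + (n : ℚ) := by
  have hdist : ∀ u v : PentV n, (cylGraph n).dist u v = Dp n u v := dist_eq_Dp n hn
  have key : ∀ u v : PentV n,
      ((pentDeg n (cylAdj n) u : ℚ) + (pentDeg n (cylAdj n) v : ℚ)) * ((cylGraph n).dist u v : ℚ)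
        = (((pentDeg n (cylAdj n) u + pentDeg n (cylAdj n) v) * Dp n u v : ℕ) : ℚ) := by
    intro u v; rw [hdist u v]; push_cast; ring
  simp only [key]
  simp_rw [← Nat.cast_sum]
  rw [main_sum n hn]
  have hM := sumM n
  rcases Nat.even_or_odd n with he | ho
  · rw [if_pos he]
    have hp : (n+1) % 2 = 1 := by
      rw [Nat.even_iff] at he; omega
    rw [hp] at hM
    have h4 : 4 * (∑ m ∈ Finset.range n, min m (n - m)) = n^2 := Nat.add_right_cancel hM
    have h4Q : (4:ℚ) * ((∑ m ∈ Finset.range n, min m (n - m) : ℕ) : ℚ) = (n:ℚ)^2 := by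
      exact_mod_cast h4
    push_cast at h4Q ⊢
    linear_combination (n:ℚ) * h4Q
  · have hne : ¬ Even n := by
      rw [Nat.even_iff]; rw [Nat.odd_iff] at ho; omega
    rw [if_neg hne]
    have hp : (n+1) % 2 = 0 := by
      rw [Nat.odd_iff] at ho; omega
    rw [hp, add_zero] at hM
    have h4Q : (4:ℚ) * ((∑ m ∈ Finset.range n, min m (n - m) : ℕ) : ℚ) + 1 = (n:ℚ)^2 := by
      exact_mod_cast hM
    push_cast at h4Q ⊢
    linear_combination (n:ℚ) * h4Q
end

section
/- For every integer n ≥ 2, let N be the 2n×2n real matrix with diagonal entries 4 at odd positions and 3 at even positions, entries −1 at positions (j, j+1) and (j+1, j) for 1 ≤ j ≤ 2n−1 and at the corners (1,2n) and (2n,1), and 0 elsewhere; let N' be the same matrix except that the corner entries (1,2n) and (2n,1) equal +1. Then the sum of the reciprocals of the eigenvalues of the matrix (1/3)N equals (7√6·n/8)·((√3+√2)^{2n} − (√3−√2)^{2n}) / ((√3+√2)^{2n} + (√3−√2)^{2n} − 2), and the sum of the reciprocals of the eigenvalues of (1/3)N' equals (7√6·n/8)·((√3+√2)^{2n} − (√3−√2)^{2n})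 / ((√3+√2)^{2n} + (√3−√2)^{2n} + 2). Equivalently, trace(((1/3)N)⁻¹) and trace(((1/3)N')⁻¹) equal these respective expressions. -/
open Matrix Real Finset

/-- The `2n × 2n` matrix `N`: diagonal entries `4` at odd (1-indexed) positions and
`3` at even positions, entries `−1` on the first super and sub diagonals and at the
corners `(1,2n)`, `(2n,1)`, and `0` elsewhere. -/
def Nmat (n : ℕ) : Matrix (Fin (2 * n)) (Fin (2 * n)) ℝ :=
  Matrix.of fun a b =>
    if a = b then (if a.val % 2 = 0 then 4 else 3)
    else if a.val + 1 = b.val ∨ b.val + 1 = a.val then -1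
    else if (a.val = 0 ∧ b.val = 2 * n - 1) ∨ (b.val = 0 ∧ a.val = 2 * n - 1) then -1
    else 0

/-- The `2n × 2n` matrix `N'`: identical to `N` except that the corner entries
`(1,2n)` and `(2n,1)` equal `+1`. -/
def Nmat' (n : ℕ) : Matrix (Fin (2 * n)) (Fin (2 * n)) ℝ :=
  Matrix.of fun a b =>
    if a = b then (if a.val % 2 = 0 then 4 else 3)
    else if a.val + 1 = b.val ∨ b.val + 1 = a.val then -1
    else if (a.val = 0 ∧ b.val = 2 * n - 1) ∨ (b.val = 0 ∧ a.val = 2 * n - 1) then 1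
    else 0

noncomputable section
namespace TrAux

noncomputable def mu : ℝ := 5 - 2 * Real.sqrt 6

lemma s6_sq : Real.sqrt 6 ^ 2 = 6 := Real.sq_sqrt (by norm_num)
lemma s6_lt : Real.sqrt 6 < 5/2 := by nlinarith [s6_sq, Real.sqrt_nonneg 6]
lemma s6_gt : 2 < Real.sqrt 6 := by nlinarith [s6_sq, Real.sqrt_nonneg 6]
lemma mu_pos : 0 < mu := by unfold mu; nlinarith [s6_lt]
lemma mu_lt_one : mu < 1 := by unfold mu; nlinarith [s6_gt]
lemma mu_ne : mu ≠ 0 := ne_of_gt mu_pos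
lemma mu_mul : mu * (10 - mu) = 1 := by unfold mu; nlinarith [s6_sq]
lemma mu_inv : mu⁻¹ = 10 - mu := inv_eq_of_mul_eq_one_right mu_mul

lemma Xpos (n : ℕ) : (0:ℝ) < mu ^ (n:ℤ) := zpow_pos mu_pos _
lemma Xlt (n : ℕ) (hn : 1 ≤ n) : mu ^ (n:ℤ) < 1 := by
  rw [zpow_natCast]
  exact pow_lt_one₀ (le_of_lt mu_pos) mu_lt_one (by omega)

noncomputable def hf (σ : ℝ) (n : ℕ) (t : ℤ) : ℝ :=
  ((mu⁻¹ - mu) * (1 - σ * mu ^ (n : ℤ)))⁻¹ * σ ^ (t / (n : ℤ)) *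
    (mu ^ (t % (n : ℤ)) + σ * mu ^ ((n : ℤ) - t % (n : ℤ)))

lemma sigma_ne {σ : ℝ} (hσ : σ ^ 2 = 1) : σ ≠ 0 := by
  intro h; rw [h] at hσ; norm_num at hσ

lemma hf_val_pos (σ : ℝ) (n : ℕ) (hσ : σ ^ 2 = 1) (hn : 1 ≤ n) {t : ℤ} (h0 : 0 ≤ t) (h1 : t ≤ (n : ℤ)) :
    hf σ n t = ((mu⁻¹ - mu) * (1 - σ * mu ^ (n : ℤ)))⁻¹ * (mu ^ t + σ * mu ^ ((n : ℤ) - t)) := by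
  rcases lt_or_eq_of_le h1 with h | h
  · rw [hf, Int.emod_eq_of_lt h0 h, Int.ediv_eq_zero_of_lt h0 h, zpow_zero, mul_one]
  · have hn0 : (n:ℤ) ≠ 0 := by omega
    rw [hf, h, Int.emod_self, Int.ediv_self hn0, zpow_one, zpow_zero, sub_zero, sub_self,
      zpow_zero]
    linear_combination (((mu⁻¹ - mu) * (1 - σ * mu ^ (n:ℤ)))⁻¹ * mu ^ (n:ℤ)) * hσ

lemma hf_val_neg (σ : ℝ) (n : ℕ) (hσ : σ ^ 2 = 1) (hn : 1 ≤ n) {t : ℤ} (h0 : -(n : ℤ) ≤ t) (h1 : t ≤ 0) :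
    hf σ n t = ((mu⁻¹ - mu) * (1 - σ * mu ^ (n : ℤ)))⁻¹ * (σ * mu ^ ((n : ℤ) + t) + mu ^ (-t)) := by
  have hσ' : σ * σ = 1 := by nlinarith
  rcases lt_or_eq_of_le h1 with h | h
  · have hn0 : (n : ℤ) ≠ 0 := by omega
    have hmod : t % (n : ℤ) = t + n := by
      have h1' : (t + (n:ℤ) * 1) % (n:ℤ) = t % n := Int.add_mul_emod_self_left t (n:ℤ) 1
      rw [mul_one] at h1'
      rw [← h1']
      exact Int.emod_eq_of_lt (by omega) (by omega)
    have hdiv : t / (n : ℤ) = -1 := by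
      have h2 := Int.mul_ediv_add_emod t (n : ℤ)
      rw [hmod] at h2
      have h3 : (n : ℤ) * (t / (n : ℤ)) = (n : ℤ) * (-1) := by linarith
      exact mul_left_cancel₀ hn0 h3
    have hsinv : σ⁻¹ = σ := by
      field_simp [sigma_ne hσ]; linarith [hσ']
    have harg : (n : ℤ) - (t + n) = -t := by ring
    have harg2 : t + (n:ℤ) = (n:ℤ) + t := by ring
    rw [hf, hmod, hdiv, _root_.zpow_neg_one, hsinv, harg, harg2]
    linear_combination (((mu⁻¹ - mu) * (1 - σ * mu ^ (n : ℤ)))⁻¹ * mu ^ (-t)) * hσ'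
  · rw [hf, h]
    simp only [Int.zero_emod, Int.zero_ediv, zpow_zero, sub_zero, add_zero, neg_zero, mul_one]
    ring

lemma hf_per (σ : ℝ) (n : ℕ) (hσ : σ ^ 2 = 1) (hn : 1 ≤ n) (t : ℤ) :
    hf σ n (t + n) = σ * hf σ n t := by
  have hn0 : (n : ℤ) ≠ 0 := by omega
  have hmod : (t + (n:ℤ)) % (n : ℤ) = t % n := by
    have h1' : (t + (n:ℤ) * 1) % (n:ℤ) = t % n := Int.add_mul_emod_self_left t (n:ℤ) 1
    rwa [mul_one] at h1'
  have hdiv : (t + (n:ℤ)) / (n : ℤ) = t / n + 1 := by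
    have := Int.add_mul_ediv_right t 1 hn0
    simpa using this
  rw [hf, hf, hmod, hdiv, zpow_add₀ (sigma_ne hσ), zpow_one]
  ring

lemma hf_rec (σ : ℝ) (n : ℕ) (hσ : σ = 1 ∨ σ = -1) (hn : 1 ≤ n) (t : ℤ)
    (hlo : -(n : ℤ) < t) (hhi : t < (n : ℤ)) :
    10 * hf σ n t - hf σ n (t - 1) - hf σ n (t + 1) = if t = 0 then 1 else 0 := by
  have hσ2 : σ ^ 2 = 1 := by rcases hσ with h | h <;> rw [h] <;> norm_num
  rcases lt_trichotomy t 0 with ht | ht | ht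
  · -- -n < t < 0
    rw [if_neg (by omega)]
    rw [hf_val_neg σ n hσ2 hn (by omega) (by omega),
        hf_val_neg σ n hσ2 hn (t := t - 1) (by omega) (by omega),
        hf_val_neg σ n hσ2 hn (t := t + 1) (by omega) (by omega)]
    have e1 : mu ^ ((n : ℤ) + (t - 1)) = mu ^ ((n : ℤ) + t) * mu⁻¹ := by
      rw [show (n : ℤ) + (t - 1) = ((n:ℤ) + t) - 1 from by ring, zpow_sub_one₀ mu_ne]
    have e2 : mu ^ (-(t - 1)) = mu ^ (-t) * mu := by
      rw [show -(t - 1) = -t + 1 from by ring, zpow_add_one₀ mu_ne]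
    have e3 : mu ^ ((n : ℤ) + (t + 1)) = mu ^ ((n : ℤ) + t) * mu := by
      rw [show (n : ℤ) + (t + 1) = ((n:ℤ) + t) + 1 from by ring, zpow_add_one₀ mu_ne]
    have e4 : mu ^ (-(t + 1)) = mu ^ (-t) * mu⁻¹ := by
      rw [show -(t + 1) = -t - 1 from by ring, zpow_sub_one₀ mu_ne]
    rw [e1, e2, e3, e4, mu_inv]
    ring
  · -- t = 0
    rw [ht]
    rw [if_pos rfl]
    rw [hf_val_pos σ n hσ2 hn (t := 0) (by omega) (by omega),
        hf_val_neg σ n hσ2 hn (t := (0:ℤ) - 1) (by omega) (by omega),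
        hf_val_pos σ n hσ2 hn (t := (0:ℤ) + 1) (by omega) (by omega)]
    have e1 : mu ^ ((n : ℤ) + (0 - 1)) = mu ^ (n:ℤ) * mu⁻¹ := by
      rw [show (n : ℤ) + (0 - 1) = (n:ℤ) - 1 from by ring, zpow_sub_one₀ mu_ne]
    have e2 : mu ^ ((n : ℤ) - (0 + 1)) = mu ^ (n:ℤ) * mu⁻¹ := by
      rw [show (n : ℤ) - (0 + 1) = (n:ℤ) - 1 from by ring, zpow_sub_one₀ mu_ne]
    have e3 : mu ^ (-((0:ℤ) - 1)) = mu := by norm_num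
    have e4 : mu ^ ((0:ℤ) + 1) = mu := by norm_num
    have e5 : mu ^ ((0:ℤ)) = 1 := zpow_zero mu
    have e6 : mu ^ ((n:ℤ) - 0) = mu ^ (n:ℤ) := by norm_num
    rw [e1, e2, e3, e4, e5, e6, mu_inv]
    have hden : ((10 - mu - mu) * (1 - σ * mu ^ (n : ℤ))) ≠ 0 := by
      apply mul_ne_zero
      · nlinarith [mu_lt_one]
      · rcases hσ with h | h <;> rw [h] <;> nlinarith [Xpos n, Xlt n hn]
    have hc : ((10 - mu - mu) * (1 - σ * mu ^ (n : ℤ)))⁻¹ *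
        ((10 - mu - mu) * (1 - σ * mu ^ (n : ℤ))) = 1 := inv_mul_cancel₀ hden
    linear_combination hc
  · -- 0 < t < n
    rw [if_neg (by omega)]
    rw [hf_val_pos σ n hσ2 hn (t := t) (by omega) (by omega),
        hf_val_pos σ n hσ2 hn (t := t - 1) (by omega) (by omega),
        hf_val_pos σ n hσ2 hn (t := t + 1) (by omega) (by omega)]
    have e1 : mu ^ (t - 1) = mu ^ t * mu⁻¹ := zpow_sub_one₀ mu_ne t
    have e2 : mu ^ ((n : ℤ) - (t - 1)) = mu ^ ((n : ℤ) - t) * mu := by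
      rw [show (n : ℤ) - (t - 1) = ((n:ℤ) - t) + 1 from by ring, zpow_add_one₀ mu_ne]
    have e3 : mu ^ (t + 1) = mu ^ t * mu := zpow_add_one₀ mu_ne t
    have e4 : mu ^ ((n : ℤ) - (t + 1)) = mu ^ ((n : ℤ) - t) * mu⁻¹ := by
      rw [show (n : ℤ) - (t + 1) = ((n:ℤ) - t) - 1 from by ring, zpow_sub_one₀ mu_ne]
    rw [e1, e2, e3, e4, mu_inv]
    ring


noncomputable def gf (σ : ℝ) (n : ℕ) (i k : ℤ) : ℝ :=
  if i % 2 = 0 then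
    (if k % 2 = 0 then 3 * hf σ n (i / 2 - k / 2)
     else hf σ n (i / 2 - k / 2) + hf σ n (i / 2 - k / 2 - 1))
  else
    (if k % 2 = 0 then hf σ n (i / 2 - k / 2) + hf σ n (i / 2 - k / 2 + 1)
     else 4 * hf σ n (i / 2 - k / 2))

lemma gf_per (σ : ℝ) (n : ℕ) (hσ : σ ^ 2 = 1) (hn : 1 ≤ n) (i k : ℤ) :
    gf σ n (i + 2 * n) k = σ * gf σ n i k := by
  have h2 : (i + 2 * (n:ℤ)) % 2 = i % 2 := by omega
  have h3 : (i + 2 * (n:ℤ)) / 2 = i / 2 + n := by omega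
  have e2 : i / 2 + (n:ℤ) - k / 2 - 1 = (i / 2 - k / 2 - 1) + n := by ring
  have e3 : i / 2 + (n:ℤ) - k / 2 + 1 = (i / 2 - k / 2 + 1) + n := by ring
  have e1 : i / 2 + (n:ℤ) - k / 2 = (i / 2 - k / 2) + n := by ring
  rw [gf, gf, h2, h3, e2, e3, e1, hf_per σ n hσ hn (i / 2 - k / 2),
    hf_per σ n hσ hn (i / 2 - k / 2 - 1), hf_per σ n hσ hn (i / 2 - k / 2 + 1)]
  split_ifs <;> ring

lemma gf_rec (σ : ℝ) (n : ℕ) (hσ : σ = 1 ∨ σ = -1) (hn : 1 ≤ n) (i k : ℤ)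
    (hi0 : 0 ≤ i) (hi1 : i < 2 * n) (hk0 : 0 ≤ k) (hk1 : k < 2 * n) :
    (if i % 2 = 0 then (4:ℝ) else 3) * gf σ n i k - gf σ n (i - 1) k - gf σ n (i + 1) k
      = if i = k then 1 else 0 := by
  have hb1 : -(n:ℤ) < i / 2 - k / 2 := by omega
  have hb2 : i / 2 - k / 2 < (n:ℤ) := by omega
  have hrec := hf_rec σ n hσ hn (i / 2 - k / 2) hb1 hb2
  rcases Int.emod_two_eq i with hpi | hpi <;> rcases Int.emod_two_eq k with hpk | hpk
  · -- i even, k even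
    have d1 : (i - 1) % 2 = 1 := by omega
    have d2 : (i + 1) % 2 = 1 := by omega
    have d3 : (i - 1) / 2 = i / 2 - 1 := by omega
    have d4 : (i + 1) / 2 = i / 2 := by omega
    simp only [gf, d1, d2, d3, d4, hpi, hpk]
    norm_num
    rw [show i / 2 - 1 - k / 2 = (i / 2 - k / 2) - 1 from by ring,
      show i / 2 - k / 2 - 1 + 1 = i / 2 - k / 2 from by ring]
    by_cases hik : i = k
    · rw [if_pos hik, if_pos (by omega : i / 2 - k / 2 = 0)] at *
      linear_combination hrec
    · rw [if_neg hik, if_neg (by omega : ¬ i / 2 - k / 2 = 0)] at *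
      linear_combination hrec
  · -- i even, k odd
    have d1 : (i - 1) % 2 = 1 := by omega
    have d2 : (i + 1) % 2 = 1 := by omega
    have d3 : (i - 1) / 2 = i / 2 - 1 := by omega
    have d4 : (i + 1) / 2 = i / 2 := by omega
    rw [if_neg (by omega : ¬ i = k)]
    simp only [gf, d1, d2, d3, d4, hpi, hpk]
    norm_num
    rw [show i / 2 - 1 - k / 2 = (i / 2 - k / 2) - 1 from by ring]
    ring
  · -- i odd, k even
    have d1 : (i - 1) % 2 = 0 := by omega
    have d2 : (i + 1) % 2 = 0 := by omega
    have d3 : (i - 1) / 2 = i / 2 := by omega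
    have d4 : (i + 1) / 2 = i / 2 + 1 := by omega
    rw [if_neg (by omega : ¬ i = k)]
    simp only [gf, d1, d2, d3, d4, hpi, hpk]
    norm_num
    rw [show i / 2 + 1 - k / 2 = (i / 2 - k / 2) + 1 from by ring]
    ring
  · -- i odd, k odd
    have d1 : (i - 1) % 2 = 0 := by omega
    have d2 : (i + 1) % 2 = 0 := by omega
    have d3 : (i - 1) / 2 = i / 2 := by omega
    have d4 : (i + 1) / 2 = i / 2 + 1 := by omega
    simp only [gf, d1, d2, d3, d4, hpi, hpk]
    norm_num
    rw [show i / 2 + 1 - k / 2 - 1 = i / 2 - k / 2 from by ring,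
      show i / 2 + 1 - k / 2 = (i / 2 - k / 2) + 1 from by ring]
    by_cases hik : i = k
    · rw [if_pos hik, if_pos (by omega : i / 2 - k / 2 = 0)] at *
      linear_combination hrec
    · rw [if_neg hik, if_neg (by omega : ¬ i / 2 - k / 2 = 0)] at *
      linear_combination hrec


noncomputable def Mm (σ : ℝ) (n : ℕ) : Matrix (Fin (2 * n)) (Fin (2 * n)) ℝ :=
  Matrix.of fun i k => gf σ n (i.val : ℤ) (k.val : ℤ)

set_option maxHeartbeats 2000000 in
lemma Nmat_row (n : ℕ) (hn : 2 ≤ n) (i j s p : Fin (2 * n))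
    (hs : (i:ℕ) + 1 = (s:ℕ) ∨ ((i:ℕ) = 2 * n - 1 ∧ (s:ℕ) = 0))
    (hp : (i:ℕ) = (p:ℕ) + 1 ∨ ((i:ℕ) = 0 ∧ (p:ℕ) = 2 * n - 1)) :
    Nmat n i j = (if j = i then (if (i:ℕ) % 2 = 0 then (4:ℝ) else 3) else 0)
      + ((if j = s then -1 else 0) + (if j = p then -1 else 0)) := by
  have hi := i.isLt; have hj := j.isLt; have hsv := s.isLt; have hpv := p.isLt
  simp only [Nmat, Matrix.of_apply, Fin.ext_iff]
  split_ifs <;> first | (exfalso; omega) | norm_num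

set_option maxHeartbeats 4000000 in
lemma Nmat'_row (n : ℕ) (hn : 2 ≤ n) (i j s p f0 fl : Fin (2 * n))
    (hs : (i:ℕ) + 1 = (s:ℕ) ∨ ((i:ℕ) = 2 * n - 1 ∧ (s:ℕ) = 0))
    (hp : (i:ℕ) = (p:ℕ) + 1 ∨ ((i:ℕ) = 0 ∧ (p:ℕ) = 2 * n - 1))
    (hf0 : (f0:ℕ) = 0) (hfl : (fl:ℕ) = 2 * n - 1) :
    Nmat' n i j = (if j = i then (if (i:ℕ) % 2 = 0 then (4:ℝ) else 3) else 0)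
      + ((if j = s then -1 else 0) + (if j = p then -1 else 0))
      + ((if j = fl then (if (i:ℕ) = 0 then 2 else 0) else 0)
        + (if j = f0 then (if (i:ℕ) = 2 * n - 1 then 2 else 0) else 0)) := by
  have hi := i.isLt; have hj := j.isLt; have hsv := s.isLt; have hpv := p.isLt
  simp only [Nmat', Matrix.of_apply, Fin.ext_iff]
  split_ifs <;> first | (exfalso; omega) | norm_num


lemma Nmul (n : ℕ) (hn : 2 ≤ n) : Nmat n * Mm 1 n = 1 := by
  have hone : ((1:ℝ)) = 1 ∨ (1:ℝ) = -1 := Or.inl rfl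
  have hsq : ((1:ℝ)) ^ 2 = 1 := by norm_num
  ext i k
  have hi := i.isLt
  have hk := k.isLt
  have hEs : ∃ sv : ℕ, (sv < 2 * n) ∧ ((i:ℕ) + 1 = sv ∨ ((i:ℕ) = 2 * n - 1 ∧ sv = 0)) := by
    by_cases h : (i:ℕ) = 2 * n - 1
    · exact ⟨0, by omega, Or.inr ⟨h, rfl⟩⟩
    · exact ⟨(i:ℕ) + 1, by omega, Or.inl rfl⟩
  obtain ⟨sv, hsv1, hsv2⟩ := hEs
  have hEp : ∃ pv : ℕ, (pv < 2 * n) ∧ ((i:ℕ) = pv + 1 ∨ ((i:ℕ) = 0 ∧ pv = 2 * n - 1)) := by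
    by_cases h : (i:ℕ) = 0
    · exact ⟨2 * n - 1, by omega, Or.inr ⟨h, rfl⟩⟩
    · exact ⟨(i:ℕ) - 1, by omega, Or.inl (by omega)⟩
  obtain ⟨pv, hpv1, hpv2⟩ := hEp
  have hsum : ∀ j : Fin (2 * n), Nmat n i j * Mm 1 n j k =
      (if j = i then (if (i:ℕ) % 2 = 0 then (4:ℝ) else 3) * Mm 1 n j k else 0)
      + ((if j = (⟨sv, hsv1⟩ : Fin (2 * n)) then -(Mm 1 n j k) else 0)
        + (if j = (⟨pv, hpv1⟩ : Fin (2 * n)) then -(Mm 1 n j k) else 0)) := by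
    intro j
    rw [Nmat_row n hn i j ⟨sv, hsv1⟩ ⟨pv, hpv1⟩ hsv2 hpv2]
    split_ifs <;> ring
  rw [Matrix.mul_apply, Matrix.one_apply,
    Finset.sum_congr rfl (fun j _ => hsum j), Finset.sum_add_distrib, Finset.sum_add_distrib,
    Finset.sum_ite_eq' Finset.univ i, Finset.sum_ite_eq' Finset.univ (⟨sv, hsv1⟩ : Fin (2 * n)),
    Finset.sum_ite_eq' Finset.univ (⟨pv, hpv1⟩ : Fin (2 * n))]
  simp only [Finset.mem_univ, if_true, Mm, Matrix.of_apply]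
  have hrec := gf_rec 1 n hone (by omega) ((i:ℕ) : ℤ) ((k:ℕ) : ℤ)
    (by omega) (by omega) (by omega) (by omega)
  have hif : (i = k) ↔ (((i:ℕ):ℤ) = ((k:ℕ):ℤ)) := by rw [Fin.ext_iff]; omega
  have epar : (if (((i:ℕ):ℤ)) % 2 = 0 then (4:ℝ) else 3) = (if (i:ℕ) % 2 = 0 then (4:ℝ) else 3) := by
    by_cases h : (i:ℕ) % 2 = 0
    · rw [if_pos h, if_pos (by omega)]
    · rw [if_neg h, if_neg (by omega)]
  rw [epar] at hrec
  by_cases hc0 : (i:ℕ) = 0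
  · have hsvv : ((sv:ℕ):ℤ) = ((i:ℕ):ℤ) + 1 := by omega
    have hpvv : ((pv:ℕ):ℤ) = (((i:ℕ):ℤ) - 1) + 2 * (n:ℤ) := by omega
    rw [hsvv, hpvv, gf_per 1 n hsq (by omega), one_mul]
    by_cases hik : i = k
    · rw [if_pos hik]; rw [if_pos (hif.mp hik)] at hrec; linear_combination hrec
    · rw [if_neg hik]; rw [if_neg (fun hh => hik (hif.mpr hh))] at hrec; linear_combination hrec
  · by_cases hc1 : (i:ℕ) = 2 * n - 1
    · have hsvv : ((sv:ℕ):ℤ) = 0 := by omega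
      have hpvv : ((pv:ℕ):ℤ) = ((i:ℕ):ℤ) - 1 := by omega
      rw [show (((i:ℕ):ℤ) + 1) = 0 + 2 * (n:ℤ) from by omega, gf_per 1 n hsq (by omega),
        one_mul] at hrec
      rw [hsvv, hpvv]
      by_cases hik : i = k
      · rw [if_pos hik]; rw [if_pos (hif.mp hik)] at hrec; linear_combination hrec
      · rw [if_neg hik]; rw [if_neg (fun hh => hik (hif.mpr hh))] at hrec; linear_combination hrec
    · have hsvv : ((sv:ℕ):ℤ) = ((i:ℕ):ℤ) + 1 := by omega
      have hpvv : ((pv:ℕ):ℤ) = ((i:ℕ):ℤ) - 1 := by omega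
      rw [hsvv, hpvv]
      by_cases hik : i = k
      · rw [if_pos hik]; rw [if_pos (hif.mp hik)] at hrec; linear_combination hrec
      · rw [if_neg hik]; rw [if_neg (fun hh => hik (hif.mpr hh))] at hrec; linear_combination hrec


lemma Nmul' (n : ℕ) (hn : 2 ≤ n) : Nmat' n * Mm (-1) n = 1 := by
  have hone : ((-1:ℝ)) = 1 ∨ ((-1:ℝ)) = -1 := Or.inr rfl
  have hsq : ((-1:ℝ)) ^ 2 = 1 := by norm_num
  ext i k
  have hi := i.isLt
  have hk := k.isLt
  have hEs : ∃ sv : ℕ, (sv < 2 * n) ∧ ((i:ℕ) + 1 = sv ∨ ((i:ℕ) = 2 * n - 1 ∧ sv = 0)) := by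
    by_cases h : (i:ℕ) = 2 * n - 1
    · exact ⟨0, by omega, Or.inr ⟨h, rfl⟩⟩
    · exact ⟨(i:ℕ) + 1, by omega, Or.inl rfl⟩
  obtain ⟨sv, hsv1, hsv2⟩ := hEs
  have hEp : ∃ pv : ℕ, (pv < 2 * n) ∧ ((i:ℕ) = pv + 1 ∨ ((i:ℕ) = 0 ∧ pv = 2 * n - 1)) := by
    by_cases h : (i:ℕ) = 0
    · exact ⟨2 * n - 1, by omega, Or.inr ⟨h, rfl⟩⟩
    · exact ⟨(i:ℕ) - 1, by omega, Or.inl (by omega)⟩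
  obtain ⟨pv, hpv1, hpv2⟩ := hEp
  have hf0b : (0:ℕ) < 2 * n := by omega
  have hflb : 2 * n - 1 < 2 * n := by omega
  have hsum : ∀ j : Fin (2 * n), Nmat' n i j * Mm (-1) n j k =
      (if j = i then (if (i:ℕ) % 2 = 0 then (4:ℝ) else 3) * Mm (-1) n j k else 0)
      + ((if j = (⟨sv, hsv1⟩ : Fin (2 * n)) then -(Mm (-1) n j k) else 0)
        + (if j = (⟨pv, hpv1⟩ : Fin (2 * n)) then -(Mm (-1) n j k) else 0))
      + ((if j = (⟨2 * n - 1, hflb⟩ : Fin (2 * n)) then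
            (if (i:ℕ) = 0 then (2:ℝ) else 0) * Mm (-1) n j k else 0)
        + (if j = (⟨0, hf0b⟩ : Fin (2 * n)) then
            (if (i:ℕ) = 2 * n - 1 then (2:ℝ) else 0) * Mm (-1) n j k else 0)) := by
    intro j
    rw [Nmat'_row n hn i j ⟨sv, hsv1⟩ ⟨pv, hpv1⟩ ⟨0, hf0b⟩ ⟨2 * n - 1, hflb⟩ hsv2 hpv2 rfl rfl]
    split_ifs <;> ring
  rw [Matrix.mul_apply, Matrix.one_apply,
    Finset.sum_congr rfl (fun j _ => hsum j), Finset.sum_add_distrib, Finset.sum_add_distrib,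
    Finset.sum_add_distrib, Finset.sum_add_distrib,
    Finset.sum_ite_eq' Finset.univ i, Finset.sum_ite_eq' Finset.univ (⟨sv, hsv1⟩ : Fin (2 * n)),
    Finset.sum_ite_eq' Finset.univ (⟨pv, hpv1⟩ : Fin (2 * n)),
    Finset.sum_ite_eq' Finset.univ (⟨2 * n - 1, hflb⟩ : Fin (2 * n)),
    Finset.sum_ite_eq' Finset.univ (⟨0, hf0b⟩ : Fin (2 * n))]
  simp only [Finset.mem_univ, if_true, Mm, Matrix.of_apply]
  have hrec := gf_rec (-1) n hone (by omega) ((i:ℕ) : ℤ) ((k:ℕ) : ℤ)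
    (by omega) (by omega) (by omega) (by omega)
  have hif : (i = k) ↔ (((i:ℕ):ℤ) = ((k:ℕ):ℤ)) := by rw [Fin.ext_iff]; omega
  have epar : (if (((i:ℕ):ℤ)) % 2 = 0 then (4:ℝ) else 3) = (if (i:ℕ) % 2 = 0 then (4:ℝ) else 3) := by
    by_cases h : (i:ℕ) % 2 = 0
    · rw [if_pos h, if_pos (by omega)]
    · rw [if_neg h, if_neg (by omega)]
  rw [epar] at hrec
  by_cases hc0 : (i:ℕ) = 0
  · have hsvv : ((sv:ℕ):ℤ) = ((i:ℕ):ℤ) + 1 := by omega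
    have hpvv : ((pv:ℕ):ℤ) = (((i:ℕ):ℤ) - 1) + 2 * (n:ℤ) := by omega
    have hflv : (((2 * n - 1 : ℕ)):ℤ) = (((i:ℕ):ℤ) - 1) + 2 * (n:ℤ) := by omega
    rw [if_pos hc0, if_neg (by omega : ¬ (i:ℕ) = 2 * n - 1), hsvv, hpvv, hflv,
      gf_per (-1) n hsq (by omega)]
    by_cases hik : i = k
    · rw [if_pos hik]; rw [if_pos (hif.mp hik)] at hrec; linear_combination hrec
    · rw [if_neg hik]; rw [if_neg (fun hh => hik (hif.mpr hh))] at hrec; linear_combination hrec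
  · by_cases hc1 : (i:ℕ) = 2 * n - 1
    · have hsvv : ((sv:ℕ):ℤ) = 0 := by omega
      have hpvv : ((pv:ℕ):ℤ) = ((i:ℕ):ℤ) - 1 := by omega
      rw [show (((i:ℕ):ℤ) + 1) = 0 + 2 * (n:ℤ) from by omega,
        gf_per (-1) n hsq (by omega)] at hrec
      rw [if_neg hc0, if_pos hc1, hsvv, hpvv,
        show (((0:ℕ)):ℤ) = (0:ℤ) from rfl]
      by_cases hik : i = k
      · rw [if_pos hik]; rw [if_pos (hif.mp hik)] at hrec; linear_combination hrec
      · rw [if_neg hik]; rw [if_neg (fun hh => hik (hif.mpr hh))] at hrec; linear_combination hrec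
    · have hsvv : ((sv:ℕ):ℤ) = ((i:ℕ):ℤ) + 1 := by omega
      have hpvv : ((pv:ℕ):ℤ) = ((i:ℕ):ℤ) - 1 := by omega
      rw [if_neg hc0, if_neg hc1, hsvv, hpvv]
      by_cases hik : i = k
      · rw [if_pos hik]; rw [if_pos (hif.mp hik)] at hrec; linear_combination hrec
      · rw [if_neg hik]; rw [if_neg (fun hh => hik (hif.mpr hh))] at hrec; linear_combination hrec


lemma sum_par (A B : ℝ) (m : ℕ) :
    ∑ j ∈ Finset.range (2 * m), (if j % 2 = 0 then A else B) = m * A + m * B := by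
  induction m with
  | zero => simp
  | succ p ih =>
      rw [show 2 * (p + 1) = (2 * p) + 1 + 1 from by ring, Finset.sum_range_succ,
        Finset.sum_range_succ, ih, if_pos (by omega : (2 * p) % 2 = 0),
        if_neg (by omega : ¬ (2 * p + 1) % 2 = 0)]
      push_cast
      ring

lemma trace_Mm (σ : ℝ) (n : ℕ) : Matrix.trace (Mm σ n) = 7 * n * hf σ n 0 := by
  have hdiag : ∀ j : Fin (2 * n), Mm σ n j j
      = if (j:ℕ) % 2 = 0 then 3 * hf σ n 0 else 4 * hf σ n 0 := by
    intro j
    simp only [Mm, Matrix.of_apply, gf, sub_self]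
    by_cases h : (j:ℕ) % 2 = 0
    · rw [if_pos (by omega : ((j:ℕ):ℤ) % 2 = 0), if_pos (by omega : ((j:ℕ):ℤ) % 2 = 0),
        if_pos h]
    · rw [if_neg (by omega : ¬ ((j:ℕ):ℤ) % 2 = 0), if_neg (by omega : ¬ ((j:ℕ):ℤ) % 2 = 0),
        if_neg h]
  rw [Matrix.trace]
  simp only [Matrix.diag, hdiag]
  rw [Fin.sum_univ_eq_sum_range (fun jv => if jv % 2 = 0 then 3 * hf σ n 0 else 4 * hf σ n 0)
    (2 * n), sum_par]
  ring

lemma hf_zero (σ : ℝ) (n : ℕ) (hσ : σ ^ 2 = 1) (hn : 1 ≤ n) :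
    hf σ n 0 = ((mu⁻¹ - mu) * (1 - σ * mu ^ (n:ℤ)))⁻¹ * (1 + σ * mu ^ (n:ℤ)) := by
  rw [hf_val_pos σ n hσ hn (by omega) (by omega)]
  norm_num

lemma sqrt32 : Real.sqrt 3 * Real.sqrt 2 = Real.sqrt 6 := by
  rw [show (6:ℝ) = 3 * 2 from by norm_num, Real.sqrt_mul (by norm_num : (0:ℝ) ≤ 3)]

lemma s3_sq : Real.sqrt 3 ^ 2 = 3 := Real.sq_sqrt (by norm_num)
lemma s2_sq : Real.sqrt 2 ^ 2 = 2 := Real.sq_sqrt (by norm_num)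

lemma pm_sq : (Real.sqrt 3 - Real.sqrt 2) ^ 2 = mu := by
  unfold mu
  linear_combination s3_sq + s2_sq - 2 * sqrt32

lemma s6_pos : (0:ℝ) < Real.sqrt 6 := by linarith [s6_gt]

lemma alg1 (Y s nn : ℝ) (hY : 0 < Y) (hY1 : Y < 1) (hs : s^2 = 6) (hsp : 0 < s) :
    3 * (7 * nn * ((4*s*(1 - 1*Y))⁻¹ * (1 + 1*Y))) = 7*s*nn/8 * (Y⁻¹ - Y)/(Y⁻¹ + Y - 2) := by
  have h1 : Y ≠ 0 := ne_of_gt hY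
  have h2 : 1 - Y ≠ 0 := by nlinarith
  have hs0 : s ≠ 0 := ne_of_gt hsp
  have h3 : Y⁻¹ + Y - 2 = (1-Y)^2 / Y := by field_simp; ring
  rw [h3]
  field_simp
  linear_combination (4*nn*Y^2 - 4*nn) * hs

lemma alg2 (Y s nn : ℝ) (hY : 0 < Y) (hY1 : Y < 1) (hs : s^2 = 6) (hsp : 0 < s) :
    3 * (7 * nn * ((4*s*(1 - -1*Y))⁻¹ * (1 + -1*Y))) = 7*s*nn/8 * (Y⁻¹ - Y)/(Y⁻¹ + Y + 2) := by
  have h1 : Y ≠ 0 := ne_of_gt hY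
  have h2 : 1 + Y ≠ 0 := by nlinarith
  have hs0 : s ≠ 0 := ne_of_gt hsp
  have h3 : Y⁻¹ + Y + 2 = (1+Y)^2 / Y := by field_simp; ring
  rw [h3]
  field_simp
  linear_combination (4*nn*Y^2 - 4*nn) * hs + 24*nn*(1-Y^2) * inv_mul_cancel₀ h2

lemma pp_sq : (Real.sqrt 3 + Real.sqrt 2) ^ 2 = mu⁻¹ := by
  rw [mu_inv]
  unfold mu
  linear_combination s3_sq + s2_sq + 2 * sqrt32

end TrAux

/-- For `n ≥ 2`, the sum of the reciprocals of the eigenvalues of `(1/3)N`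
(equivalently, the trace of its inverse, since `(1/3)N` is positive definite)
equals `(7√6 n/8)((√3+√2)^{2n} − (√3−√2)^{2n}) / ((√3+√2)^{2n} + (√3−√2)^{2n} − 2)`,
and for `(1/3)N'` it equals the analogous expression with `+2` in the denominator. -/
theorem trace_inv_LS (n : ℕ) (hn : 2 ≤ n) :
    Matrix.trace (((3 : ℝ)⁻¹ • Nmat n)⁻¹) =
      7 * Real.sqrt 6 * (n : ℝ) / 8 *
          ((Real.sqrt 3 + Real.sqrt 2) ^ (2 * n) -
            (Real.sqrt 3 - Real.sqrt 2) ^ (2 * n)) /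
        ((Real.sqrt 3 + Real.sqrt 2) ^ (2 * n) +
            (Real.sqrt 3 - Real.sqrt 2) ^ (2 * n) - 2) ∧
    Matrix.trace (((3 : ℝ)⁻¹ • Nmat' n)⁻¹) =
      7 * Real.sqrt 6 * (n : ℝ) / 8 *
          ((Real.sqrt 3 + Real.sqrt 2) ^ (2 * n) -
            (Real.sqrt 3 - Real.sqrt 2) ^ (2 * n)) /
        ((Real.sqrt 3 + Real.sqrt 2) ^ (2 * n) +
            (Real.sqrt 3 - Real.sqrt 2) ^ (2 * n) + 2) := by
  open TrAux in
  have hppn : (Real.sqrt 3 + Real.sqrt 2) ^ (2 * n) = (mu ^ n)⁻¹ := by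
    rw [pow_mul, pp_sq, inv_pow]
  have hpmn : (Real.sqrt 3 - Real.sqrt 2) ^ (2 * n) = mu ^ n := by
    rw [pow_mul, pm_sq]
  have hYpos : (0:ℝ) < mu ^ n := pow_pos mu_pos n
  have hYlt : mu ^ n < 1 := pow_lt_one₀ (le_of_lt mu_pos) mu_lt_one (by omega)
  have hzn : mu ^ ((n:ℕ):ℤ) = mu ^ n := zpow_natCast mu n
  have e46 : mu⁻¹ - mu = 4 * Real.sqrt 6 := by rw [mu_inv]; unfold mu; ring
  constructor
  · have hinv : ((3 : ℝ)⁻¹ • Nmat n)⁻¹ = (3:ℝ) • Mm 1 n := by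
      apply Matrix.inv_eq_right_inv
      rw [Matrix.smul_mul, Matrix.mul_smul, Nmul n hn, smul_smul]
      norm_num
    rw [hinv, Matrix.trace_smul, trace_Mm, hf_zero 1 n (by norm_num) (by omega), hzn,
      hppn, hpmn, smul_eq_mul, e46]
    exact alg1 (mu ^ n) (Real.sqrt 6) n hYpos hYlt s6_sq s6_pos
  · have hinv : ((3 : ℝ)⁻¹ • Nmat' n)⁻¹ = (3:ℝ) • Mm (-1) n := by
      apply Matrix.inv_eq_right_inv
      rw [Matrix.smul_mul, Matrix.mul_smul, Nmul' n hn, smul_smul]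
      norm_num
    rw [hinv, Matrix.trace_smul, trace_Mm, hf_zero (-1) n (by norm_num) (by omega), hzn,
      hppn, hpmn, smul_eq_mul, e46]
    exact alg2 (mu ^ n) (Real.sqrt 6) n hYpos hYlt s6_sq s6_pos
end
end

section
/- For all integers n ≥ 1 and 1 ≤ m ≤ n, let R_{n,m} be the n×n integer matrix with diagonal entries −2 except that the (m,m) entry is −3, entries 1 at positions (i, i+1) and (i+1, i) for 1 ≤ i ≤ n−1, and 0 elsewhere. Then det(R_{n,m}) = (−1)^n · (1 + n + m + mn − m²). -/
open Matrix

/-- The tridiagonal `n × n` integer matrix `R_{n,m}` with `−2` on the diagonal except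
for a single `−3` at the (1-indexed) position `(m, m)`, and `1` on the first super
and sub diagonals. -/
def Rnm (n m : ℕ) : Matrix (Fin n) (Fin n) ℤ :=
  Matrix.of fun a b =>
    if a = b then (if a.val + 1 = m then -3 else -2)
    else if a.val + 1 = b.val ∨ b.val + 1 = a.val then 1
    else 0

lemma Rnm_sub1 (n m : ℕ) :
    (Rnm (n+1) m).submatrix Fin.succ Fin.succ = Rnm n (m-1) := by
  ext a b
  simp only [Rnm, Matrix.submatrix_apply, Matrix.of_apply, Fin.ext_iff, Fin.val_succ]
  split_ifs <;> simp_all <;> omega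

lemma succAbove_one_succ {n : ℕ} (j : Fin n) :
    ((1 : Fin (n+2)).succAbove j.succ) = j.succ.succ := by
  have h : (1 : Fin (n+2)) = (0 : Fin (n+1)).succ := rfl
  rw [h, Fin.succ_succAbove_succ, Fin.succAbove_zero]

lemma succAbove_one_zero {n : ℕ} :
    ((1 : Fin (n+2)).succAbove 0) = 0 := by
  have h : (1 : Fin (n+2)) = (0 : Fin (n+1)).succ := rfl
  rw [h, Fin.succ_succAbove_zero]

lemma Rnm_row0 (n m : ℕ) (i : Fin n) : Rnm (n+2) m 0 i.succ.succ = 0 := by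
  simp only [Rnm, Matrix.of_apply, Fin.ext_iff, Fin.val_succ, Fin.val_zero]
  split_ifs <;> simp_all <;> omega

lemma Rnm_col0 (n m : ℕ) (i : Fin n) : Rnm (n+2) m i.succ.succ 0 = 0 := by
  simp only [Rnm, Matrix.of_apply, Fin.ext_iff, Fin.val_succ, Fin.val_zero]
  split_ifs <;> simp_all <;> omega

lemma Rnm_00 (n m : ℕ) : Rnm (n+2) m 0 0 = if m = 1 then -3 else -2 := by
  simp only [Rnm, Matrix.of_apply, if_pos rfl, Fin.val_zero, zero_add]
  rcases eq_or_ne m 1 with hm | hm <;> simp [hm] <;> omega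

lemma Rnm_01 (n m : ℕ) : Rnm (n+2) m 0 (1 : Fin (n+2)) = 1 := by
  simp only [Rnm, Matrix.of_apply]
  norm_num [Fin.ext_iff]

lemma Rnm_10 (n m : ℕ) : Rnm (n+2) m (1 : Fin (n+2)) 0 = 1 := by
  simp only [Rnm, Matrix.of_apply]
  norm_num [Fin.ext_iff]

lemma Rnm_sub2 (n m : ℕ) :
    ((Rnm (n+2) m).submatrix Fin.succ ((1 : Fin (n+2)).succAbove)).submatrix
      ((0 : Fin (n+1)).succAbove) Fin.succ = Rnm n (m-2) := by
  rw [Fin.succAbove_zero]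
  ext a b
  simp only [Matrix.submatrix_apply, succAbove_one_succ]
  simp only [Rnm, Matrix.of_apply, Fin.ext_iff, Fin.val_succ]
  split_ifs <;> simp_all <;> omega

lemma det_Rnm_aux : ∀ n m, m ≤ n →
    (Rnm n m).det =
      (-1) ^ n * (1 + (n : ℤ) + (m : ℤ) + (m : ℤ) * (n : ℤ) - (m : ℤ) ^ 2)
  | 0, m, h => by
    interval_cases m
    simp [Matrix.det_fin_zero]
  | 1, m, h => by
    interval_cases m <;>
      simp [Matrix.det_fin_one, Rnm] <;> norm_num
  | (n+2), m, h => by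
    have ih1 := det_Rnm_aux (n+1) (m-1) (by omega)
    have ih0 := det_Rnm_aux n (m-2) (by omega)
    rw [Matrix.det_succ_row_zero, Fin.sum_univ_succ, Fin.sum_univ_succ]
    have hsum0 : (∑ i : Fin n,
        (-1) ^ (((i.succ.succ : Fin (n+2))) : ℕ) * Rnm (n+2) m 0 i.succ.succ *
          ((Rnm (n+2) m).submatrix Fin.succ i.succ.succ.succAbove).det) = 0 := by
      apply Finset.sum_eq_zero
      intro i _
      rw [Rnm_row0]; ring
    have m0 : ((Rnm (n+2) m).submatrix Fin.succ ((0 : Fin (n+2)).succAbove))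
        = Rnm (n+1) (m-1) := by
      rw [Fin.succAbove_zero]; exact Rnm_sub1 (n+1) m
    set B := (Rnm (n+2) m).submatrix Fin.succ ((1 : Fin (n+2)).succAbove) with hB
    have hBdet : B.det = (Rnm n (m-2)).det := by
      rw [Matrix.det_succ_column_zero, Fin.sum_univ_succ]
      have hsum1 : (∑ i : Fin n,
          (-1) ^ (((i.succ : Fin (n+1))) : ℕ) * B i.succ 0 *
            (B.submatrix i.succ.succAbove Fin.succ).det) = 0 := by
        apply Finset.sum_eq_zero
        intro i _
        have : B i.succ 0 = 0 := by
          rw [hB, Matrix.submatrix_apply, succAbove_one_zero]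
          exact Rnm_col0 n m i
        rw [this]; ring
      have hB00 : B 0 0 = 1 := by
        rw [hB, Matrix.submatrix_apply, succAbove_one_zero]
        exact Rnm_10 n m
      rw [hsum1, hB00, hB, Rnm_sub2]
      simp
    have h1' : (Fin.succ (0 : Fin (n+1)) : Fin (n+2)) = 1 := rfl
    have h1 : (((1 : Fin (n+2))) : ℕ) = 1 := rfl
    rw [hsum0, m0, ih1, h1', ← hB, hBdet, ih0, Rnm_00, Rnm_01]
    simp only [h1, Fin.val_zero, pow_zero, pow_one]
    rcases m with _ | _ | m
    · norm_num; push_cast; ring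
    · norm_num; push_cast; ring
    · have hm : ¬ (m + 2 = 1) := by omega
      rw [if_neg hm]
      simp only [Nat.add_sub_cancel, show m + 2 - 2 = m from rfl]
      push_cast; ring

/-- For `1 ≤ m ≤ n`, `det R_{n,m} = (−1)^n (1 + n + m + mn − m²)`. -/
theorem det_Rnm (n m : ℕ) (h1 : 1 ≤ m) (h2 : m ≤ n) :
    (Rnm n m).det =
      (-1) ^ n * (1 + (n : ℤ) + (m : ℤ) + (m : ℤ) * (n : ℤ) - (m : ℤ) ^ 2) := by
  exact det_Rnm_aux n m h2
end

section
/- For all integers n ≥ 2 and 1 ≤ i ≤ n, let R be the 2n×2n integer matrix with diagonal entries −2 except that the (2i, 2i) entry is −3, entries 1 at positions (k, k+1) and (k+1, k) for 1 ≤ k ≤ 2n−1 and at the corner positions (1, 2n) and (2n, 1), and 0 elsewhere. Then det(R) = 2n (independently of i). -/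
open Matrix

/-- The `2n × 2n` integer matrix `R` with diagonal `−2` except for a single `−3` at
the (1-indexed) position `(2i, 2i)`, entries `1` on the first super and sub
diagonals and at the corners `(1, 2n)`, `(2n, 1)`, and `0` elsewhere. -/
def Rcirc (n i : ℕ) : Matrix (Fin (2 * n)) (Fin (2 * n)) ℤ :=
  Matrix.of fun a b =>
    if a = b then (if a.val + 1 = 2 * i then -3 else -2)
    else if a.val + 1 = b.val ∨ b.val + 1 = a.val ∨
        (a.val = 0 ∧ b.val = 2 * n - 1) ∨ (b.val = 0 ∧ a.val = 2 * n - 1) then 1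
    else 0


/-- Pure tridiagonal matrix: diagonal −2, off-diagonals 1. -/
def Tri (m : ℕ) : Matrix (Fin m) (Fin m) ℤ :=
  Matrix.of fun a b =>
    if a = b then -2 else if a.val + 1 = b.val ∨ b.val + 1 = a.val then 1 else 0

lemma Tri_apply (m : ℕ) (a b : Fin m) : Tri m a b =
    if a.val = b.val then -2 else if a.val + 1 = b.val ∨ b.val + 1 = a.val then 1 else 0 := by
  simp [Tri, Fin.ext_iff]

lemma succAbove_one_val (m : ℕ) (c : Fin (m+1)) :
    ((1 : Fin (m+1+1)).succAbove c).val = if c.val = 0 then 0 else c.val + 1 := by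
  rcases Nat.eq_zero_or_pos c.val with h | h
  · simp [Fin.succAbove, Fin.lt_def, h]
  · simp only [Fin.succAbove, Fin.lt_def, Fin.coe_castSucc, Fin.val_one]
    rw [if_neg (by omega), if_neg (by omega), Fin.val_succ]

lemma tri_det : ∀ m : ℕ, (Tri m).det = (-1) ^ m * (m + 1)
  | 0 => by simp [Tri]
  | 1 => by simp [Tri, Matrix.det_fin_one]
  | (m + 2) => by
    have h1 := tri_det m
    have h2 := tri_det (m + 1)
    rw [show ((m+2) : ℕ) = (m+1)+1 from rfl] at *
    rw [Matrix.det_succ_row_zero, Fin.sum_univ_succ, Fin.sum_univ_succ]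
    have e00 : Tri (m+1+1) 0 0 = -2 := by simp [Tri]
    have e01 : Tri (m+1+1) 0 (Fin.succ 0) = 1 := by
      simp [Tri_apply]
    have etail : ∀ j : Fin m, Tri (m+1+1) 0 j.succ.succ = 0 := by
      intro j
      simp [Tri_apply]
    have hminor0 : (Tri (m+1+1)).submatrix Fin.succ (Fin.succAbove 0) = Tri (m+1) := by
      ext a b
      simp only [Tri_apply, submatrix_apply, Fin.succAbove_zero, Fin.val_succ]
      split_ifs <;> first | contradiction | omega
    have hminor1 : ((Tri (m+1+1)).submatrix Fin.succ (Fin.succAbove (Fin.succ 0))).det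
        = (Tri m).det := by
      have hso : (Fin.succ (0 : Fin (m+1))) = (1 : Fin (m+1+1)) := by
        simp [Fin.ext_iff]
      rw [hso, Matrix.det_succ_column_zero, Fin.sum_univ_succ]
      have ec0 : (Tri (m+1+1)).submatrix Fin.succ (Fin.succAbove 1) 0 0 = 1 := by
        simp [Tri_apply, succAbove_one_val]
      have ectail : ∀ a : Fin m,
          (Tri (m+1+1)).submatrix Fin.succ (Fin.succAbove 1) a.succ 0 = 0 := by
        intro a
        simp [Tri_apply, succAbove_one_val]
      have hinner : ((Tri (m+1+1)).submatrix Fin.succ (Fin.succAbove 1)).submatrix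
          (Fin.succAbove 0) Fin.succ = Tri m := by
        ext a b
        simp only [Tri_apply, submatrix_apply, Fin.succAbove_zero, Fin.val_succ,
          succAbove_one_val]
        split_ifs <;> first | contradiction | omega
      simp only [ec0, hinner]
      rw [Finset.sum_congr rfl fun a _ => by rw [ectail a]]
      simp
    simp only [e00, e01, hminor0]
    rw [Finset.sum_congr rfl fun j (_ : j ∈ Finset.univ) => by rw [etail j]]
    rw [hminor1]
    simp only [Finset.sum_const_zero, mul_zero, zero_mul, add_zero]
    rw [h1, h2]
    push_cast
    simp [Fin.val_succ]
    ring

/-- Pure circulant: diagonal −2, cyclic off-diagonals 1. -/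
def Cyc (n : ℕ) : Matrix (Fin (2*n)) (Fin (2*n)) ℤ :=
  Matrix.of fun a b =>
    if a = b then -2
    else if a.val + 1 = b.val ∨ b.val + 1 = a.val ∨
        (a.val = 0 ∧ b.val = 2 * n - 1) ∨ (b.val = 0 ∧ a.val = 2 * n - 1) then 1
    else 0

lemma Cyc_apply (n : ℕ) (a b : Fin (2*n)) : Cyc n a b =
    if a.val = b.val then -2
    else if a.val + 1 = b.val ∨ b.val + 1 = a.val ∨
        (a.val = 0 ∧ b.val = 2 * n - 1) ∨ (b.val = 0 ∧ a.val = 2 * n - 1) then 1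
    else 0 := by
  simp [Cyc, Fin.ext_iff]

lemma cyc_det (n : ℕ) (hn : 2 ≤ n) : (Cyc n).det = 0 := by
  rw [← Matrix.exists_mulVec_eq_zero_iff]
  refine ⟨fun _ => 1, ?_, ?_⟩
  · intro h
    have := congrFun h ⟨0, by omega⟩
    simp at this
  · funext a
    have ha := a.isLt
    obtain ⟨v1, hv1l, hv1⟩ : ∃ v1 : ℕ, v1 < 2*n ∧
        (a.val + 1 = 2*n ∧ v1 = 0 ∨ a.val + 1 ≠ 2*n ∧ v1 = a.val + 1) := by
      by_cases h : a.val + 1 = 2*n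
      · exact ⟨0, by omega, Or.inl ⟨h, rfl⟩⟩
      · exact ⟨a.val + 1, by omega, Or.inr ⟨h, rfl⟩⟩
    obtain ⟨v2, hv2l, hv2⟩ : ∃ v2 : ℕ, v2 < 2*n ∧
        (a.val = 0 ∧ v2 = 2*n - 1 ∨ a.val ≠ 0 ∧ v2 = a.val - 1) := by
      by_cases h : a.val = 0
      · exact ⟨2*n - 1, by omega, Or.inl ⟨h, rfl⟩⟩
      · exact ⟨a.val - 1, by omega, Or.inr ⟨h, rfl⟩⟩
    have hrow : ∀ b : Fin (2*n), Cyc n a b =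
        (if a = b then (-2 : ℤ) else 0) +
        ((if (⟨v1, hv1l⟩ : Fin (2*n)) = b then (1:ℤ) else 0) +
         (if (⟨v2, hv2l⟩ : Fin (2*n)) = b then (1:ℤ) else 0)) := by
      intro b
      have hb := b.isLt
      simp only [Cyc_apply, Fin.ext_iff]
      split_ifs <;> first | contradiction | omega
    simp only [Matrix.mulVec, dotProduct, mul_one, Pi.zero_apply]
    rw [Finset.sum_congr rfl fun b _ => hrow b]
    rw [Finset.sum_add_distrib, Finset.sum_add_distrib,
      Finset.sum_ite_eq, Finset.sum_ite_eq, Finset.sum_ite_eq]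
    simp

lemma det_Rcirc_last (n : ℕ) (hn : 2 ≤ n) : (Rcirc n n).det = 2 * (n : ℤ) := by
  set j : Fin (2*n) := ⟨2*n - 1, by omega⟩ with hj
  have hR : Rcirc n n = (Cyc n).updateRow j (Cyc n j + -(Pi.single j 1)) := by
    ext a b
    have ha := a.isLt
    have hb := b.isLt
    rw [Matrix.updateRow_apply]
    by_cases hab : a = j
    · subst hab
      simp only [Rcirc, Cyc, Matrix.of_apply, Pi.add_apply, Pi.neg_apply, Pi.single_apply,
        Fin.ext_iff, hj]
      split_ifs <;> first | contradiction | omega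
    · rw [if_neg hab]
      have haj : a.val ≠ 2*n - 1 := fun h => hab (Fin.ext (by simpa [hj] using h))
      simp only [Rcirc, Cyc, Matrix.of_apply, Fin.ext_iff]
      split_ifs <;> first | contradiction | omega
  have hcof : ((Cyc n).updateRow j (Pi.single j 1)).det = (Tri (2*n - 1)).det := by
    have hm : 2*n = (2*n - 1) + 1 := by omega
    set m := 2*n - 1 with hmdef
    set M := (Cyc n).updateRow j (Pi.single j 1) with hM
    rw [← Matrix.det_reindex_self (finCongr hm) M]
    rw [Matrix.det_succ_row _ (Fin.last m)]
    have hrowmem : ∀ x : Fin (m+1),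
        (Matrix.reindex (finCongr hm) (finCongr hm) M) (Fin.last m) x
          = if x = Fin.last m then 1 else 0 := by
      intro x
      have h1 : ((finCongr hm).symm (Fin.last m)) = j := by
        simp [Fin.ext_iff, hj, Fin.last, hmdef]
      simp only [Matrix.reindex_apply, Matrix.submatrix_apply, hM, h1,
        Matrix.updateRow_self, Pi.single_apply]
      congr 1
      simp [Fin.ext_iff, hj, Fin.last, eq_comm, hmdef]
    rw [Finset.sum_eq_single (Fin.last m)]
    · rw [hrowmem]
      have hminor : (Matrix.reindex (finCongr hm) (finCongr hm) M).submatrix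
          (Fin.last m).succAbove (Fin.last m).succAbove = Tri m := by
        ext a b
        have ha := a.isLt
        have hb := b.isLt
        simp only [Matrix.submatrix_apply, Matrix.reindex_apply, Fin.succAbove_last, hM]
        rw [Matrix.updateRow_ne (by simp [Fin.ext_iff, hj, Fin.castSucc]; omega)]
        simp only [Cyc_apply, Tri_apply, finCongr_symm_apply, Fin.coe_cast, Fin.coe_castSucc]
        split_ifs <;> first | contradiction | omega
      rw [hminor]
      simp only [if_pos, ite_true, if_true, mul_one, one_mul]
      have : ((-1 : ℤ) ^ ((Fin.last m : ℕ) + (Fin.last m : ℕ))) = 1 :=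
        Even.neg_one_pow ⟨(Fin.last m : ℕ), by ring⟩
      rw [this, one_mul]
    · intro x _ hx
      rw [hrowmem, if_neg hx]
      ring
    · intro h
      exact absurd (Finset.mem_univ _) h
  have h0 : (Cyc n).det = 0 := cyc_det n hn
  rw [hR, Matrix.det_updateRow_add]
  rw [Matrix.updateRow_eq_self, h0, zero_add]
  have : (-(Pi.single j 1) : Fin (2*n) → ℤ) = (-1 : ℤ) • (Pi.single j 1 : Fin (2*n) → ℤ) := by
    rw [neg_one_smul]
  rw [this, Matrix.det_updateRow_smul, hcof, tri_det]
  have hodd : Odd (2*n - 1) := ⟨n - 1, by omega⟩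
  rw [hodd.neg_one_pow]
  have : ((2*n - 1 : ℕ) : ℤ) = 2 * (n:ℤ) - 1 := by
    push_cast [Nat.cast_sub (by omega : 1 ≤ 2*n)]
    ring
  rw [this]
  ring

open Fin.NatCast

/-- For `n ≥ 2` and `1 ≤ i ≤ n`, `det R = 2n` (independently of `i`). -/
theorem det_Rcirc (n i : ℕ) (hn : 2 ≤ n) (h1 : 1 ≤ i) (h2 : i ≤ n) :
    (Rcirc n i).det = 2 * (n : ℤ) := by
  haveI : NeZero (2*n) := ⟨by omega⟩
  set e : Fin (2*n) ≃ Fin (2*n) := Equiv.addRight ((2*n - 2*i : ℕ) : Fin (2*n)) with he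
  have hs : (((2*n - 2*i : ℕ) : Fin (2*n))).val = 2*n - 2*i :=
    Fin.val_cast_of_lt (by omega)
  have hval : ∀ x : Fin (2*n), (e x).val = (x.val + (2*n - 2*i)) % (2*n) := by
    intro x
    simp [he, Equiv.addRight, Fin.add_def, hs]
  have hmod : ∀ x : ℕ, x < 2*n →
      (x + (2*n - 2*i)) % (2*n)
        = if x + (2*n - 2*i) < 2*n then x + (2*n - 2*i) else x + (2*n - 2*i) - 2*n := by
    intro x hx
    split_ifs with h
    · exact Nat.mod_eq_of_lt h
    · rw [Nat.mod_eq_sub_mod (by omega), Nat.mod_eq_of_lt (by omega)]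
  have hR : Rcirc n i = (Rcirc n n).submatrix e e := by
    ext a b
    have ha := a.isLt
    have hb := b.isLt
    have hA := hval a
    rw [hmod a.val a.isLt] at hA
    have hB := hval b
    rw [hmod b.val b.isLt] at hB
    simp only [Rcirc, Matrix.submatrix_apply, Matrix.of_apply, Fin.ext_iff]
    split_ifs at hA hB ⊢ <;> first | contradiction | omega
  rw [hR, Matrix.det_submatrix_equiv_self, det_Rcirc_last n hn]
end

section
/- For all integers n ≥ 2 and 1 ≤ i < j ≤ n, let W₁ be the 2n×2n integer matrix with diagonal entries −2, except that the (2i, 2i) and (2j, 2j) entries are −3, entries 1 at positions (k, k+1) and (k+1, k) for 1 ≤ k ≤ 2n−1 and at the corner positions (1, 2n) and (2n, 1), and 0 elsewhere. Then det(W₁) = 4n + 8ij − 4n(i − j) − 4(i² + j²). -/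
open Matrix

lemma succAbove_val {n : ℕ} (p : Fin (n+1)) (i : Fin n) :
    ((p.succAbove i) : ℕ) = if (i:ℕ) < (p:ℕ) then (i:ℕ) else (i:ℕ)+1 := by
  rw [Fin.succAbove]
  rcases lt_or_ge ((i:ℕ)) ((p:ℕ)) with h | h
  · rw [if_pos (by rwa [Fin.lt_def, Fin.coe_castSucc]), if_pos h, Fin.coe_castSucc]
  · rw [if_neg (by rw [Fin.lt_def, Fin.coe_castSucc]; omega), if_neg (by omega), Fin.val_succ]

def Tmat (m : ℕ) (d : ℕ → ℤ) : Matrix (Fin m) (Fin m) ℤ :=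
  Matrix.of fun a b =>
    if (a:ℕ) = (b:ℕ) then d a
    else if (a:ℕ) + 1 = (b:ℕ) ∨ (b:ℕ) + 1 = (a:ℕ) then 1 else 0

lemma Tmat_apply (m : ℕ) (d : ℕ → ℤ) (a b : Fin m) :
    Tmat m d a b =
      if (a:ℕ) = (b:ℕ) then d a
      else if (a:ℕ) + 1 = (b:ℕ) ∨ (b:ℕ) + 1 = (a:ℕ) then 1 else 0 := rfl

lemma Trec (k : ℕ) (d : ℕ → ℤ) :
    (Tmat (k+2) d).det = d (k+1) * (Tmat (k+1) d).det - (Tmat k d).det := by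
  set A := Tmat (k+2) d with hA
  set j0 : Fin (k+2) := Fin.castSucc (Fin.last k) with hj0
  have hj0v : (j0 : ℕ) = k := rfl
  -- the (last, last) minor is Tmat (k+1) d
  have hM1 : A.submatrix (Fin.last (k+1)).succAbove (Fin.last (k+1)).succAbove
      = Tmat (k+1) d := by
    ext a b
    simp [hA, Tmat_apply, Fin.succAbove_last, Fin.coe_castSucc]
  -- column embedding facts for j0
  have hcol : ∀ b : Fin k, j0.succAbove (Fin.castSucc b) = Fin.castSucc (Fin.castSucc b) := by
    intro b
    apply Fin.ext
    rw [succAbove_val, if_pos (by rw [Fin.coe_castSucc, hj0v]; exact b.isLt)]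
    simp
  have hcol2 : j0.succAbove (Fin.last k) = Fin.last (k+1) := by
    apply Fin.ext
    rw [succAbove_val, if_neg (by rw [Fin.val_last, hj0v]; omega)]
    simp
  -- the (last, k) minor has determinant det (Tmat k d)
  have hB : (A.submatrix (Fin.last (k+1)).succAbove j0.succAbove).det = (Tmat k d).det := by
    rw [Matrix.det_succ_column _ (Fin.last k), Fin.sum_univ_castSucc]
    have hz2 : ∀ r : Fin k,
        (A.submatrix (Fin.last (k+1)).succAbove j0.succAbove) (Fin.castSucc r) (Fin.last k)
          = 0 := by
      intro r
      have hr := r.isLt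
      rw [Matrix.submatrix_apply, Fin.succAbove_last, hcol2, hA, Tmat_apply]
      rw [if_neg (by simp [Fin.coe_castSucc, Fin.val_last]; omega),
        if_neg (by simp [Fin.coe_castSucc, Fin.val_last]; omega)]
    rw [Finset.sum_eq_zero (fun r _ => by rw [hz2 r, mul_zero, zero_mul])]
    have hent : (A.submatrix (Fin.last (k+1)).succAbove j0.succAbove) (Fin.last k) (Fin.last k)
        = 1 := by
      rw [Matrix.submatrix_apply, Fin.succAbove_last, hcol2, hA, Tmat_apply]
      rw [if_neg (by simp [Fin.coe_castSucc, Fin.val_last]),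
        if_pos (by simp [Fin.coe_castSucc, Fin.val_last])]
    have hmin : (A.submatrix (Fin.last (k+1)).succAbove j0.succAbove).submatrix
        (Fin.last k).succAbove (Fin.last k).succAbove = Tmat k d := by
      ext a b
      simp only [Matrix.submatrix_apply, Fin.succAbove_last]
      rw [hcol]
      simp [hA, Tmat_apply, Fin.coe_castSucc]
    rw [hent, hmin]
    have : ((-1 : ℤ) ^ ((Fin.last k : ℕ) + (Fin.last k : ℕ))) = 1 :=
      Even.neg_one_pow ⟨(Fin.last k : ℕ), rfl⟩
    rw [this]
    ring
  rw [Matrix.det_succ_row A (Fin.last (k+1)), Fin.sum_univ_castSucc, Fin.sum_univ_castSucc]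
  have hz : ∀ x : Fin k, A (Fin.last (k+1)) (Fin.castSucc (Fin.castSucc x)) = 0 := by
    intro x
    have hx := x.isLt
    rw [hA, Tmat_apply]
    rw [if_neg (by simp [Fin.coe_castSucc, Fin.val_last]; omega),
      if_neg (by simp [Fin.coe_castSucc, Fin.val_last]; omega)]
  rw [Finset.sum_eq_zero (fun x _ => by rw [hz x, mul_zero, zero_mul])]
  have hent2 : A (Fin.last (k+1)) (Fin.castSucc (Fin.last k)) = 1 := by
    rw [hA, Tmat_apply]
    rw [if_neg (by simp [Fin.coe_castSucc, Fin.val_last]),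
      if_pos (by simp [Fin.coe_castSucc, Fin.val_last])]
  have hdiag : A (Fin.last (k+1)) (Fin.last (k+1)) = d (k+1) := by
    rw [hA, Tmat_apply, if_pos rfl, Fin.val_last]
  have hs1 : ((-1 : ℤ) ^ ((Fin.last (k+1) : ℕ) + (Fin.castSucc (Fin.last k) : ℕ))) = -1 :=
    Odd.neg_one_pow ⟨k, by simp [Fin.val_last, Fin.coe_castSucc]; ring⟩
  have hs2 : ((-1 : ℤ) ^ ((Fin.last (k+1) : ℕ) + (Fin.last (k+1) : ℕ))) = 1 :=
    Even.neg_one_pow ⟨k+1, by simp [Fin.val_last]⟩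
  rw [hent2, hdiag, hs1, hs2, hM1, hB]
  ring

def dd (p q : ℕ) : ℕ → ℤ := fun x => if x + 1 = p ∨ x + 1 = q then -3 else -2

def bb (p q : ℕ) : ℕ → ℤ := fun k =>
  ((k:ℤ) + 1) + (if p ≤ k then (p:ℤ) * ((k:ℤ) + 1 - (p:ℤ)) else 0) +
    (if q ≤ k then (q:ℤ) * ((k:ℤ) + 1 - (q:ℤ))
      + (p:ℤ) * ((q:ℤ) - (p:ℤ)) * ((k:ℤ) + 1 - (q:ℤ)) else 0)

set_option maxHeartbeats 2000000 in
lemma bb_rec (p q k : ℕ) (hp : 1 ≤ p) (hpq : p < q) :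
    bb p q (k+2) = (if k + 2 = p ∨ k + 2 = q then 3 else 2) * bb p q (k+1) - bb p q k := by
  have hP : p ≤ k ∨ p = k+1 ∨ p = k+2 ∨ k+2 < p := by omega
  have hQ : q ≤ k ∨ q = k+1 ∨ q = k+2 ∨ k+2 < q := by omega
  simp only [bb]
  rcases hP with hP | hP | hP | hP <;> rcases hQ with hQ | hQ | hQ | hQ <;>
    [skip; skip; skip; skip; skip; skip; skip; skip; skip; skip; skip; skip; skip; skip;
     skip; skip] <;>
    (try subst hP) <;> (try subst hQ) <;>
    split_ifs <;> first | (exfalso; omega) | (push_cast; ring)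

lemma Tmat_det (p q : ℕ) (hp : 1 ≤ p) (hpq : p < q) (k : ℕ) :
    (Tmat k (dd p q)).det = (-1)^k * bb p q k := by
  induction k using Nat.twoStepInduction with
  | zero =>
    rw [Matrix.det_fin_zero]
    simp only [bb, if_neg (by omega : ¬ p ≤ 0), if_neg (by omega : ¬ q ≤ 0)]
    norm_num
  | one =>
    rw [Matrix.det_fin_one]
    have h0 : Tmat 1 (dd p q) 0 0 = dd p q 0 := rfl
    rw [h0]
    by_cases h : p = 1
    · subst h
      simp only [dd, bb, if_neg (by omega : ¬ q ≤ 1)]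
      norm_num
    · simp only [dd, bb, if_neg (by omega : ¬ (0+1 = p ∨ 0+1 = q)),
        if_neg (by omega : ¬ p ≤ 1), if_neg (by omega : ¬ q ≤ 1)]
      norm_num
  | more k ih1 ih2 =>
    rw [Trec, ih1, ih2]
    have h2 : dd p q (k+1) = -(if k + 2 = p ∨ k + 2 = q then (3:ℤ) else 2) := by
      simp only [dd]
      split_ifs <;> first | rfl | omega
    rw [h2, bb_rec p q k hp hpq, pow_succ, pow_succ]
    ring

def Cm (m p q : ℕ) : Matrix (Fin m) (Fin m) ℤ :=
  Matrix.of fun a b =>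
    if a = b then (if a.val + 1 = p ∨ a.val + 1 = q then -3 else -2)
    else if a.val + 1 = b.val ∨ b.val + 1 = a.val ∨
        (a.val = 0 ∧ b.val = m - 1) ∨ (b.val = 0 ∧ a.val = m - 1) then 1
    else 0

lemma Cm_apply (m p q : ℕ) (a b : Fin m) :
    Cm m p q a b =
      if (a:ℕ) = (b:ℕ) then (if (a:ℕ) + 1 = p ∨ (a:ℕ) + 1 = q then -3 else -2)
      else if (a:ℕ) + 1 = (b:ℕ) ∨ (b:ℕ) + 1 = (a:ℕ) ∨
          ((a:ℕ) = 0 ∧ (b:ℕ) = m - 1) ∨ ((b:ℕ) = 0 ∧ (a:ℕ) = m - 1) then 1 else 0 := by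
  simp only [Cm, Matrix.of_apply, Fin.ext_iff]

set_option maxHeartbeats 1000000 in
lemma Cm_det (s p q : ℕ) (hs : 2 ≤ s) (hp : 2 ≤ p) (hpq : p < q) (hq : q ≤ s + 2) :
    (Cm (s+2) p q).det =
      (-1)^s * (bb p q (s+2) - bb (p-1) (q-1) s) + 2 * (-1)^(s+1) := by
  have hm : s + 2 - 1 = s + 1 := by omega
  set C := Cm (s+2) p q with hC
  set z : Fin s := ⟨0, by omega⟩ with hzdef
  have hz0 : (z : ℕ) = 0 := rfl
  -- column/row embedding helpers
  have hsz : ∀ i : Fin (s+1), (Fin.castSucc (Fin.castSucc z)).succAbove i = Fin.succ i := by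
    intro i
    apply Fin.ext
    rw [succAbove_val]
    simp [Fin.coe_castSucc, hz0, Fin.val_succ]
  have hsz1 : ∀ i : Fin s, (Fin.castSucc z).succAbove i = Fin.succ i := by
    intro i
    apply Fin.ext
    rw [succAbove_val]
    simp [Fin.coe_castSucc, hz0, Fin.val_succ]
  have hjc : ∀ b : Fin s, (Fin.castSucc (Fin.last s)).succAbove (Fin.castSucc b)
      = Fin.castSucc (Fin.castSucc b) := by
    intro b
    apply Fin.ext
    rw [succAbove_val, if_pos (by simp only [Fin.coe_castSucc, Fin.val_last]; exact b.isLt)]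
    simp
  have hjc2 : (Fin.castSucc (Fin.last s)).succAbove (Fin.last s) = Fin.last (s+1) := by
    apply Fin.ext
    rw [succAbove_val, if_neg (by simp)]
    simp
  -- determinant of the (last, 0) minor N₁
  have hN1 : (C.submatrix (Fin.last (s+1)).succAbove
      (Fin.castSucc (Fin.castSucc z)).succAbove).det = 1 + bb (p-1) (q-1) s := by
    set N1 := C.submatrix (Fin.last (s+1)).succAbove (Fin.castSucc (Fin.castSucc z)).succAbove
      with hN1def
    rw [Matrix.det_succ_row_zero N1, Fin.sum_univ_castSucc]
    have hrow : ∀ c : Fin (s+1), N1 0 c = C (Fin.castSucc 0) (Fin.succ c) := by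
      intro c
      rw [hN1def, Matrix.submatrix_apply, Fin.succAbove_last, hsz]
    -- the partial sum over Fin s picks only x = z
    have hsum : ∑ x : Fin s, (-1 : ℤ) ^ ((Fin.castSucc x : ℕ)) * N1 0 (Fin.castSucc x) *
        (N1.submatrix Fin.succ (Fin.castSucc x).succAbove).det
        = (-1 : ℤ) ^ ((Fin.castSucc z : ℕ)) * N1 0 (Fin.castSucc z) *
          (N1.submatrix Fin.succ (Fin.castSucc z).succAbove).det := by
      refine Finset.sum_eq_single z (fun x _ hx => ?_) (fun h => absurd (Finset.mem_univ z) h)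
      have hxv : (x : ℕ) ≠ 0 := fun h => hx (Fin.ext (h.trans hz0.symm))
      have hxl := x.isLt
      rw [hrow, hC, Cm_apply,
        if_neg (by simp only [Fin.coe_castSucc, Fin.val_succ, Fin.val_zero, Fin.val_last, true_or, or_true, true_and, and_true, false_or, or_false] <;> first | trivial | omega),
        if_neg (by simp only [Fin.coe_castSucc, Fin.val_succ, Fin.val_zero, Fin.val_last, true_or, or_true, true_and, and_true, false_or, or_false] <;> first | trivial | omega), mul_zero, zero_mul]
    rw [hsum]
    -- the z term : entry 1, lower triangular minor with unit diagonal
    have hent0 : N1 0 (Fin.castSucc z) = 1 := by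
      rw [hrow, hC, Cm_apply,
        if_neg (by simp only [Fin.coe_castSucc, Fin.val_succ, Fin.val_zero, Fin.val_last, true_or, or_true, true_and, and_true, false_or, or_false, hz0] <;> first | trivial | omega),
        if_pos (by simp only [Fin.coe_castSucc, Fin.val_succ, Fin.val_zero, Fin.val_last, true_or, or_true, true_and, and_true, false_or, or_false, hz0] <;> first | trivial | omega)]
    have hP1 : (N1.submatrix Fin.succ (Fin.castSucc z).succAbove).det = 1 := by
      have htri : ∀ a b : Fin s, (a : ℕ) < (b : ℕ) →
          (N1.submatrix Fin.succ (Fin.castSucc z).succAbove) a b = 0 := by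
        intro a b hab
        have hal := a.isLt; have hbl := b.isLt
        rw [Matrix.submatrix_apply, hN1def, Matrix.submatrix_apply, Fin.succAbove_last,
          hsz1, hsz, hC, Cm_apply,
          if_neg (by simp only [Fin.coe_castSucc, Fin.val_succ, Fin.val_zero, Fin.val_last, true_or, or_true, true_and, and_true, false_or, or_false] <;> first | trivial | omega),
          if_neg (by simp only [Fin.coe_castSucc, Fin.val_succ, Fin.val_zero, Fin.val_last, true_or, or_true, true_and, and_true, false_or, or_false] <;> first | trivial | omega)]
      have htri' : (N1.submatrix Fin.succ (Fin.castSucc z).succAbove).BlockTriangular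
          OrderDual.toDual := by
        intro a b h
        exact htri a b (OrderDual.toDual_lt_toDual.mp h)
      rw [Matrix.det_of_lowerTriangular _ htri']
      apply Finset.prod_eq_one
      intro a _
      have hal := a.isLt
      rw [Matrix.submatrix_apply, hN1def, Matrix.submatrix_apply, Fin.succAbove_last,
        hsz1, hsz, hC, Cm_apply,
        if_neg (by simp only [Fin.coe_castSucc, Fin.val_succ, Fin.val_zero, Fin.val_last, true_or, or_true, true_and, and_true, false_or, or_false] <;> first | trivial | omega),
        if_pos (by simp only [Fin.coe_castSucc, Fin.val_succ, Fin.val_zero, Fin.val_last, true_or, or_true, true_and, and_true, false_or, or_false] <;> first | trivial | omega)]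
    -- last term: corner entry 1, minor is the inner tridiagonal matrix
    have hentl : N1 0 (Fin.last s) = 1 := by
      rw [hrow, hC, Cm_apply,
        if_neg (by simp only [Fin.coe_castSucc, Fin.val_succ, Fin.val_zero, Fin.val_last, true_or, or_true, true_and, and_true, false_or, or_false] <;> first | trivial | omega),
        if_pos (by simp only [Fin.coe_castSucc, Fin.val_succ, Fin.val_zero, Fin.val_last, true_or, or_true, true_and, and_true, false_or, or_false] <;> first | trivial | omega)]
    have hPlast : N1.submatrix Fin.succ (Fin.last s).succAbove
        = Tmat s (dd (p-1) (q-1)) := by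
      ext a b
      have hal := a.isLt; have hbl := b.isLt
      rw [Matrix.submatrix_apply, hN1def, Matrix.submatrix_apply, Fin.succAbove_last,
        Fin.succAbove_last, hsz, hC, Cm_apply, Tmat_apply]
      simp only [dd, Fin.coe_castSucc, Fin.val_succ]
      split_ifs <;> first | rfl | omega
    rw [hent0, hentl, hP1, hPlast, Tmat_det (p-1) (q-1) (by omega) (by omega) s]
    have hss : (-1:ℤ)^s * (-1:ℤ)^s = 1 := by
      rw [← pow_add]; exact Even.neg_one_pow ⟨s, rfl⟩
    simp only [Fin.coe_castSucc, hz0, Fin.val_last, pow_zero]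
    linear_combination bb (p-1) (q-1) s * hss

  -- determinant of the (last, s) minor N₂
  have hN2 : (C.submatrix (Fin.last (s+1)).succAbove
      (Fin.castSucc (Fin.last s)).succAbove).det = (-1)^s + (-1)^s * bb p q s := by
    set N2 := C.submatrix (Fin.last (s+1)).succAbove (Fin.castSucc (Fin.last s)).succAbove
      with hN2def
    rw [Matrix.det_succ_column N2 (Fin.last s), Fin.sum_univ_castSucc]
    have hcolv : ∀ r : Fin (s+1), N2 r (Fin.last s) = C (Fin.castSucc r) (Fin.last (s+1)) := by
      intro r
      rw [hN2def, Matrix.submatrix_apply, Fin.succAbove_last, hjc2]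
    have hsum2 : ∑ x : Fin s, (-1 : ℤ) ^ ((Fin.castSucc x : ℕ) + (Fin.last s : ℕ)) *
        N2 (Fin.castSucc x) (Fin.last s) *
        ((N2.submatrix (Fin.castSucc x).succAbove (Fin.last s).succAbove)).det
        = (-1 : ℤ) ^ ((Fin.castSucc z : ℕ) + (Fin.last s : ℕ)) *
          N2 (Fin.castSucc z) (Fin.last s) *
          ((N2.submatrix (Fin.castSucc z).succAbove (Fin.last s).succAbove)).det := by
      refine Finset.sum_eq_single z (fun x _ hx => ?_) (fun h => absurd (Finset.mem_univ z) h)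
      have hxv : (x : ℕ) ≠ 0 := fun h => hx (Fin.ext (h.trans hz0.symm))
      have hxl := x.isLt
      rw [hcolv, hC, Cm_apply,
        if_neg (by simp only [Fin.coe_castSucc, Fin.val_succ, Fin.val_zero, Fin.val_last, true_or, or_true, true_and, and_true, false_or, or_false] <;> first | trivial | omega),
        if_neg (by simp only [Fin.coe_castSucc, Fin.val_succ, Fin.val_zero, Fin.val_last, true_or, or_true, true_and, and_true, false_or, or_false] <;> first | trivial | omega),
        mul_zero, zero_mul]
    rw [hsum2]
    have hent0 : N2 (Fin.castSucc z) (Fin.last s) = 1 := by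
      rw [hcolv, hC, Cm_apply,
        if_neg (by simp only [Fin.coe_castSucc, Fin.val_succ, Fin.val_zero, Fin.val_last, hz0, true_or, or_true, true_and, and_true, false_or, or_false] <;> first | trivial | omega),
        if_pos (by simp only [Fin.coe_castSucc, Fin.val_succ, Fin.val_zero, Fin.val_last, hz0, true_or, or_true, true_and, and_true, false_or, or_false] <;> first | trivial | omega)]
    have hQ1 : (N2.submatrix (Fin.castSucc z).succAbove (Fin.last s).succAbove).det = 1 := by
      have htri : (N2.submatrix (Fin.castSucc z).succAbove (Fin.last s).succAbove).BlockTriangular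
          id := by
        intro a b h
        have hab : (b : ℕ) < (a : ℕ) := h
        have hal := a.isLt; have hbl := b.isLt
        rw [Matrix.submatrix_apply, hN2def, Matrix.submatrix_apply]
        simp only [Fin.succAbove_last]
        rw [hsz1, hjc, hC, Cm_apply,
          if_neg (by simp only [Fin.coe_castSucc, Fin.val_succ, Fin.val_zero, Fin.val_last, true_or, or_true, true_and, and_true, false_or, or_false] <;> first | trivial | omega),
          if_neg (by simp only [Fin.coe_castSucc, Fin.val_succ, Fin.val_zero, Fin.val_last, true_or, or_true, true_and, and_true, false_or, or_false] <;> first | trivial | omega)]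
      rw [Matrix.det_of_upperTriangular htri]
      apply Finset.prod_eq_one
      intro a _
      have hal := a.isLt
      rw [Matrix.submatrix_apply, hN2def, Matrix.submatrix_apply]
      simp only [Fin.succAbove_last]
      rw [hsz1, hjc, hC, Cm_apply,
        if_neg (by simp only [Fin.coe_castSucc, Fin.val_succ, Fin.val_zero, Fin.val_last, true_or, or_true, true_and, and_true, false_or, or_false] <;> first | trivial | omega),
        if_pos (by simp only [Fin.coe_castSucc, Fin.val_succ, Fin.val_zero, Fin.val_last, true_or, or_true, true_and, and_true, false_or, or_false] <;> first | trivial | omega)]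
    have hentl : N2 (Fin.last s) (Fin.last s) = 1 := by
      rw [hcolv, hC, Cm_apply,
        if_neg (by simp only [Fin.coe_castSucc, Fin.val_succ, Fin.val_zero, Fin.val_last, true_or, or_true, true_and, and_true, false_or, or_false] <;> first | trivial | omega),
        if_pos (by simp only [Fin.coe_castSucc, Fin.val_succ, Fin.val_zero, Fin.val_last, true_or, or_true, true_and, and_true, false_or, or_false] <;> first | trivial | omega)]
    have hQ2 : N2.submatrix (Fin.last s).succAbove (Fin.last s).succAbove
        = Tmat s (dd p q) := by
      ext a b
      have hal := a.isLt; have hbl := b.isLt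
      rw [Matrix.submatrix_apply, hN2def, Matrix.submatrix_apply]
      simp only [Fin.succAbove_last]
      rw [hjc, hC, Cm_apply, Tmat_apply]
      simp only [dd, Fin.coe_castSucc, Fin.val_succ]
      split_ifs <;> first | rfl | omega
    rw [hent0, hentl, hQ1, hQ2, Tmat_det p q (by omega) hpq s]
    have hss : (-1:ℤ)^((Fin.last s : ℕ) + (Fin.last s : ℕ)) = 1 :=
      Even.neg_one_pow ⟨(Fin.last s : ℕ), rfl⟩
    rw [hss]
    simp only [Fin.coe_castSucc, hz0, Fin.val_last, Nat.zero_add]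
    ring
  -- main expansion along the last row
  rw [Matrix.det_succ_row C (Fin.last (s+1)), Fin.sum_univ_castSucc, Fin.sum_univ_castSucc]
  have hsum3 : ∑ x : Fin s, (-1 : ℤ) ^ ((Fin.last (s+1) : ℕ) + (Fin.castSucc (Fin.castSucc x) : ℕ)) *
      C (Fin.last (s+1)) (Fin.castSucc (Fin.castSucc x)) *
      ((C.submatrix (Fin.last (s+1)).succAbove (Fin.castSucc (Fin.castSucc x)).succAbove)).det
      = (-1 : ℤ) ^ ((Fin.last (s+1) : ℕ) + (Fin.castSucc (Fin.castSucc z) : ℕ)) *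
        C (Fin.last (s+1)) (Fin.castSucc (Fin.castSucc z)) *
        ((C.submatrix (Fin.last (s+1)).succAbove (Fin.castSucc (Fin.castSucc z)).succAbove)).det := by
    refine Finset.sum_eq_single z (fun x _ hx => ?_) (fun h => absurd (Finset.mem_univ z) h)
    have hxv : (x : ℕ) ≠ 0 := fun h => hx (Fin.ext (h.trans hz0.symm))
    have hxl := x.isLt
    rw [hC, Cm_apply,
      if_neg (by simp only [Fin.coe_castSucc, Fin.val_succ, Fin.val_zero, Fin.val_last, true_or, or_true, true_and, and_true, false_or, or_false] <;> first | trivial | omega),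
      if_neg (by simp only [Fin.coe_castSucc, Fin.val_succ, Fin.val_zero, Fin.val_last, true_or, or_true, true_and, and_true, false_or, or_false] <;> first | trivial | omega),
      mul_zero, zero_mul]
  rw [hsum3]
  have hcorner : C (Fin.last (s+1)) (Fin.castSucc (Fin.castSucc z)) = 1 := by
    rw [hC, Cm_apply,
      if_neg (by simp only [Fin.coe_castSucc, Fin.val_succ, Fin.val_zero, Fin.val_last, hz0, true_or, or_true, true_and, and_true, false_or, or_false] <;> first | trivial | omega),
      if_pos (by simp only [Fin.coe_castSucc, Fin.val_succ, Fin.val_zero, Fin.val_last, hz0, true_or, or_true, true_and, and_true, false_or, or_false] <;> first | trivial | omega)]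
  have hsub : C (Fin.last (s+1)) (Fin.castSucc (Fin.last s)) = 1 := by
    rw [hC, Cm_apply,
      if_neg (by simp only [Fin.coe_castSucc, Fin.val_succ, Fin.val_zero, Fin.val_last, true_or, or_true, true_and, and_true, false_or, or_false] <;> first | trivial | omega),
      if_pos (by simp only [Fin.coe_castSucc, Fin.val_succ, Fin.val_zero, Fin.val_last, true_or, or_true, true_and, and_true, false_or, or_false] <;> first | trivial | omega)]
  have hdiag : C (Fin.last (s+1)) (Fin.last (s+1)) = dd p q (s+1) := by
    rw [hC, Cm_apply, if_pos rfl]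
    simp only [dd, Fin.val_last]
  have hlastmin : C.submatrix (Fin.last (s+1)).succAbove (Fin.last (s+1)).succAbove
      = Tmat (s+1) (dd p q) := by
    ext a b
    have hal := a.isLt; have hbl := b.isLt
    rw [Matrix.submatrix_apply, Fin.succAbove_last, hC, Cm_apply, Tmat_apply]
    simp only [dd, Fin.coe_castSucc, Fin.val_succ]
    split_ifs <;> first | rfl | omega
  rw [hcorner, hsub, hdiag, hlastmin, hN1, hN2, Tmat_det p q (by omega) hpq (s+1)]
  have hd : dd p q (s+1) = -(if s + 2 = p ∨ s + 2 = q then (3:ℤ) else 2) := by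
    simp only [dd]
    split_ifs <;> first | rfl | omega
  rw [hd, bb_rec p q s (by omega) hpq]
  simp only [Fin.val_last, Fin.coe_castSucc, hz0, Nat.add_zero]
  have e1 : (-1:ℤ)^(s+1+s) = -1 := Odd.neg_one_pow ⟨s, by ring⟩
  have e2 : (-1:ℤ)^(s+1+(s+1)) = 1 := Even.neg_one_pow ⟨s+1, by ring⟩
  have e3 : (-1:ℤ)^(s+1) = -(-1:ℤ)^s := by rw [pow_succ]; ring
  rw [e1, e2, e3]
  ring

/-- The `2n × 2n` integer matrix `W₁` with diagonal `−2` except for entries `−3` at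
the (1-indexed) positions `(2i, 2i)` and `(2j, 2j)`, entries `1` on the first super
and sub diagonals and at the corners `(1, 2n)`, `(2n, 1)`, and `0` elsewhere. -/
def W1 (n i j : ℕ) : Matrix (Fin (2 * n)) (Fin (2 * n)) ℤ :=
  Matrix.of fun a b =>
    if a = b then (if a.val + 1 = 2 * i ∨ a.val + 1 = 2 * j then -3 else -2)
    else if a.val + 1 = b.val ∨ b.val + 1 = a.val ∨
        (a.val = 0 ∧ b.val = 2 * n - 1) ∨ (b.val = 0 ∧ a.val = 2 * n - 1) then 1
    else 0

/-- For `n ≥ 2` and `1 ≤ i < j ≤ n`,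
`det W₁ = 4n + 8ij − 4n(i − j) − 4(i² + j²)`. -/
theorem det_W1 (n i j : ℕ) (hn : 2 ≤ n) (h1 : 1 ≤ i) (hij : i < j) (h2 : j ≤ n) :
    (W1 n i j).det =
      4 * (n : ℤ) + 8 * (i : ℤ) * (j : ℤ) - 4 * (n : ℤ) * ((i : ℤ) - (j : ℤ)) -
        4 * ((i : ℤ) ^ 2 + (j : ℤ) ^ 2) := by
  obtain ⟨t, rfl⟩ : ∃ t, n = t + 2 := ⟨n - 2, by omega⟩
  have hW : W1 (t+2) i j = Cm (2*(t+2)) (2*i) (2*j) := rfl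
  rw [hW, show (2*(t+2) : ℕ) = (2*t+2)+2 from by ring,
    Cm_det (2*t+2) (2*i) (2*j) (by omega) (by omega) (by omega) (by omega)]
  have hev : (-1:ℤ)^(2*t+2) = 1 := Even.neg_one_pow ⟨t+1, by ring⟩
  have hev2 : (-1:ℤ)^(2*t+2+1) = -1 := Odd.neg_one_pow ⟨t+1, by ring⟩
  rw [hev, hev2]
  simp only [bb]
  rw [if_pos (by omega : 2*i ≤ 2*t+2+2), if_pos (by omega : 2*j ≤ 2*t+2+2),
    if_pos (by omega : 2*i-1 ≤ 2*t+2)]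
  by_cases hj : j = t+2
  · rw [if_neg (by omega : ¬ (2*j-1 ≤ 2*t+2))]
    have e1 : ((2*i-1:ℕ):ℤ) = 2*(i:ℤ)-1 := by omega
    rw [e1]
    subst hj
    push_cast
    ring
  · rw [if_pos (by omega : 2*j-1 ≤ 2*t+2)]
    have e1 : ((2*i-1:ℕ):ℤ) = 2*(i:ℤ)-1 := by omega
    have e2 : ((2*j-1:ℕ):ℤ) = 2*(j:ℤ)-1 := by omega
    rw [e1, e2]
    push_cast
    ring
end
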